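/- arXiv:1901.03303 — 7 statements merged into one kernel-verified Lean document; each statement's English description precedes it below -/
import Mathlib

section
/- Let α ∈ (0,1), η ≥ 0 and λ ∈ ℂ with Re(λ) + η > 0 or Im(λ) ≠ 0. Then the function ξ ↦ |ξ|^{2α−1}/(ξ² + η + λ) is Bochner integrable on ℝ, and (sin(απ)/π) · ∫_ℝ |ξ|^{2α−1}/(ξ² + η + λ) dξ = (λ + η)^{α−1}, where (λ + η)^{α−1} denotes the principal branch of the complex power. -/
open MeasureTheory

open Set Complex Real

lemma auxA {μ : ℂ} (hμ : μ ∈ Complex.slitPlane) :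
    ∃ c > (0:ℝ), ∀ y : ℝ, 0 ≤ y → c * (1 + y) ≤ ‖(y:ℂ) + μ‖ := by
  rcases hμ with hre | him
  · refine ⟨min 1 μ.re, lt_min one_pos hre, fun y hy => ?_⟩
    have h1 : ((y:ℂ) + μ).re = y + μ.re := by simp
    have h2 : ((y:ℂ) + μ).re ≤ ‖(y:ℂ) + μ‖ := Complex.re_le_norm _
    rw [h1] at h2
    refine le_trans ?_ h2
    rcases le_total μ.re 1 with h | h
    · rw [min_eq_right h]; nlinarith
    · rw [min_eq_left h]; nlinarith
  · set M := ‖μ‖ with hM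
    have hiM : |μ.im| ≤ M := Complex.abs_im_le_norm μ
    have himpos : 0 < |μ.im| := abs_pos.2 him
    have hMpos : 0 < 1 + M := by positivity
    refine ⟨|μ.im| / (2 * (1 + M)), by positivity, fun y hy => ?_⟩
    rcases le_total y (1 + 2 * M) with h | h
    · have h2 : |((y:ℂ) + μ).im| ≤ ‖(y:ℂ) + μ‖ := Complex.abs_im_le_norm _
      have h1 : ((y:ℂ) + μ).im = μ.im := by simp
      rw [h1] at h2
      refine le_trans ?_ h2
      rw [div_mul_eq_mul_div, div_le_iff₀ (by positivity)]
      nlinarith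
    · have h2 : ‖(y:ℂ)‖ ≤ ‖(y:ℂ) + μ‖ + M := by
        calc ‖(y:ℂ)‖ = ‖((y:ℂ) + μ) + -μ‖ := by ring_nf
        _ ≤ ‖(y:ℂ) + μ‖ + ‖-μ‖ := norm_add_le _ _
        _ = ‖(y:ℂ) + μ‖ + M := by rw [norm_neg]
      have h3 : ‖(y:ℂ)‖ = y := by rw [Complex.norm_real, Real.norm_eq_abs, _root_.abs_of_nonneg hy]
      have h4 : y - M ≤ ‖(y:ℂ) + μ‖ := by linarith [h2, h3.symm ▸ h2]
      refine le_trans ?_ h4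
      have hc2 : |μ.im| / (2 * (1 + M)) ≤ 1/2 := by
        rw [div_le_iff₀ (by positivity)]; nlinarith
      nlinarith [mul_le_mul_of_nonneg_right hc2 (by positivity : (0:ℝ) ≤ 1 + y)]

variable {E : Type*} [NormedAddCommGroup E]

lemma auxB {f : ℝ → E} (hm : AEStronglyMeasurable f (volume.restrict (Ioi 0)))
    {C a b : ℝ} (ha : -1 < a) (hb : b < -1)
    (h1 : ∀ y ∈ Ioc (0:ℝ) 1, ‖f y‖ ≤ C * y ^ a)
    (h2 : ∀ y ∈ Ioi (1:ℝ), ‖f y‖ ≤ C * y ^ b) :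
    IntegrableOn f (Ioi 0) := by
  have hIoc : IntegrableOn f (Ioc 0 1) := by
    have hg : IntegrableOn (fun y : ℝ => C * y ^ a) (Ioc 0 1) := by
      refine Integrable.const_mul ?_ C
      rw [← IntegrableOn, ← intervalIntegrable_iff_integrableOn_Ioc_of_le zero_le_one]
      exact intervalIntegral.intervalIntegrable_rpow' ha
    refine Integrable.mono hg (hm.mono_set Ioc_subset_Ioi_self) ?_
    filter_upwards [ae_restrict_mem measurableSet_Ioc] with y hy
    exact (h1 y hy).trans (le_abs_self _)
  have hIoi : IntegrableOn f (Ioi 1) := by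
    have hg : IntegrableOn (fun y : ℝ => C * y ^ b) (Ioi 1) :=
      (integrableOn_Ioi_rpow_of_lt hb one_pos).const_mul C
    refine Integrable.mono hg (hm.mono_set (Ioi_subset_Ioi zero_le_one)) ?_
    filter_upwards [ae_restrict_mem measurableSet_Ioi] with y hy
    exact (h2 y hy).trans (le_abs_self _)
  have : IntegrableOn f (Ioc 0 1 ∪ Ioi 1) := hIoc.union hIoi
  rwa [Ioc_union_Ioi_eq_Ioi zero_le_one] at this

lemma normval {α : ℝ} (μ : ℂ) {y : ℝ} (hy : 0 < y) :
    ‖((y ^ (α-1) : ℝ) : ℂ) / ((y:ℂ) + μ)‖ = y ^ (α-1) / ‖(y:ℂ) + μ‖ := by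
  rw [norm_div, Complex.norm_real, Real.norm_eq_abs,
    _root_.abs_of_nonneg (Real.rpow_nonneg hy.le _)]

lemma auxC {α : ℝ} (hα : α ∈ Ioo (0:ℝ) 1) {μ : ℂ} {c : ℝ} (hc : 0 < c)
    (hbd : ∀ y : ℝ, 0 ≤ y → c * (1 + y) ≤ ‖(y:ℂ) + μ‖) :
    IntegrableOn (fun y : ℝ => ((y ^ (α-1) : ℝ) : ℂ) / ((y:ℂ) + μ)) (Ioi 0) := by
  obtain ⟨hα0, hα1⟩ := hα
  refine auxB (by apply Measurable.aestronglyMeasurable; fun_prop)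
    (C := c⁻¹) (a := α - 1) (b := α - 2) (by linarith) (by linarith) ?_ ?_
  · intro y hy
    rw [normval μ hy.1]
    have h1 : c * 1 ≤ ‖(y:ℂ) + μ‖ :=
      le_trans (by nlinarith [hy.1.le]) (hbd y hy.1.le)
    rw [div_le_iff₀ (by linarith), inv_mul_eq_div, div_mul_eq_mul_div,
      le_div_iff₀ hc]
    nlinarith [Real.rpow_nonneg hy.1.le (α-1)]
  · intro y (hy : 1 < y)
    have hy0 : 0 < y := by linarith
    rw [normval μ hy0]
    have h1 : c * y ≤ ‖(y:ℂ) + μ‖ :=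
      le_trans (by nlinarith) (hbd y hy0.le)
    have habs : (0:ℝ) < ‖(y:ℂ) + μ‖ := lt_of_lt_of_le (by positivity) h1
    rw [div_le_iff₀ habs, inv_mul_eq_div, div_mul_eq_mul_div, le_div_iff₀ hc]
    have : y ^ (α - 2) * y = y ^ (α - 1) := by
      rw [← Real.rpow_add_one hy0.ne']; ring_nf
    calc y ^ (α-1) * c = c * (y ^ (α-2) * y) := by rw [this]; ring
    _ ≤ y ^ (α-2) * ‖(y:ℂ) + μ‖ := by nlinarith [Real.rpow_nonneg hy0.le (α-2)]

lemma auxC2 {α : ℝ} (hα : α ∈ Ioo (0:ℝ) 1) {c : ℝ} (hc : 0 < c) :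
    IntegrableOn (fun y : ℝ => y ^ (α-1) / (c * (1 + y)) ^ 2) (Ioi 0) := by
  obtain ⟨hα0, hα1⟩ := hα
  refine auxB (by apply Measurable.aestronglyMeasurable; fun_prop)
    (C := (c⁻¹)^2) (a := α - 1) (b := α - 3) (by linarith) (by linarith) ?_ ?_
  · intro y hy
    have hy0 : (0:ℝ) < y := hy.1
    have h1 : (0:ℝ) < 1 + y := by linarith
    rw [Real.norm_eq_abs,
      _root_.abs_of_nonneg (div_nonneg (Real.rpow_nonneg hy0.le _) (sq_nonneg _))]
    rw [div_le_iff₀ (by positivity)]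
    have h2 : (c*1)^2 ≤ (c * (1+y))^2 := by
      have hh : (0:ℝ) ≤ c^2 * (2*y + y^2) := by positivity
      nlinarith [hh]
    calc y ^ (α-1) = (c⁻¹)^2 * y^(α-1) * (c*1)^2 := by
          field_simp
    _ ≤ (c⁻¹)^2 * y^(α-1) * (c*(1+y))^2 := by
          gcongr
  · intro y (hy : 1 < y)
    have hy0 : 0 < y := by linarith
    rw [Real.norm_eq_abs, _root_.abs_of_nonneg (by positivity)]
    rw [div_le_iff₀ (by positivity)]
    have hyy : y ^ (α-3) * y^2 = y ^ (α-1) := by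
      rw [← Real.rpow_natCast y 2, ← Real.rpow_add hy0]; ring_nf
    have h2 : (c*y)^2 ≤ (c*(1+y))^2 := by
      have hh : (0:ℝ) ≤ c^2 * (1 + 2*y) := by positivity
      nlinarith [hh]
    calc y ^ (α-1) = (c⁻¹)^2 * (y ^ (α-3)) * (c*y)^2 := by
          rw [mul_pow, ← hyy]; field_simp
    _ ≤ (c⁻¹)^2 * y ^ (α-3) * (c*(1+y))^2 := by
          gcongr

lemma auxE {α : ℝ} (hα : α ∈ Ioo (0:ℝ) 1) {μ₀ : ℂ} (hμ₀ : μ₀ ∈ Complex.slitPlane) :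
    DifferentiableAt ℂ (fun μ : ℂ => ∫ y in Ioi (0:ℝ), ((y ^ (α-1) : ℝ) : ℂ) / ((y:ℂ) + μ)) μ₀ := by
  obtain ⟨c, hc, hbd⟩ := auxA hμ₀
  have hε : (0:ℝ) < c/2 := by linarith
  have hball : ∀ μ ∈ Metric.ball μ₀ (c/2), ∀ y : ℝ, 0 ≤ y →
      c/2 * (1 + y) ≤ ‖(y:ℂ) + μ‖ := by
    intro μ hμ y hy
    have h1 : ‖(y:ℂ) + μ₀‖ ≤ ‖(y:ℂ) + μ‖ + ‖μ₀ - μ‖ := by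
      calc ‖(y:ℂ) + μ₀‖ = ‖((y:ℂ) + μ) + (μ₀ - μ)‖ := by ring_nf
      _ ≤ _ := norm_add_le _ _
    have h2 : ‖μ₀ - μ‖ < c/2 := by
      rw [← Complex.dist_eq, dist_comm]; exact hμ
    have h3 := hbd y hy
    nlinarith
  have hne : ∀ μ ∈ Metric.ball μ₀ (c/2), ∀ y : ℝ, 0 ≤ y → (y:ℂ) + μ ≠ 0 := by
    intro μ hμ y hy h0
    have := hball μ hμ y hy
    rw [h0, norm_zero] at this
    nlinarith
  have main := hasDerivAt_integral_of_dominated_loc_of_deriv_le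
    (F := fun (μ : ℂ) (y : ℝ) => ((y ^ (α-1) : ℝ) : ℂ) / ((y:ℂ) + μ))
    (F' := fun (μ : ℂ) (y : ℝ) => -(((y ^ (α-1) : ℝ) : ℂ) / ((y:ℂ) + μ) ^ 2))
    (x₀ := μ₀) (bound := fun y => y ^ (α-1) / (c/2 * (1 + y)) ^ 2)
    (Metric.ball_mem_nhds μ₀ hε)
    (Filter.Eventually.of_forall fun μ => by apply Measurable.aestronglyMeasurable; fun_prop)
    (auxC hα hc hbd)
    (by apply Measurable.aestronglyMeasurable; fun_prop)
    ?_ (auxC2 hα hε) ?_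
  · exact main.2.differentiableAt
  · rw [ae_restrict_iff' measurableSet_Ioi]
    refine Filter.Eventually.of_forall fun y hy => fun μ hμ => ?_
    have hy0 : (0:ℝ) < y := hy
    have hb := hball μ hμ y hy0.le
    have hpos : (0:ℝ) < c/2 * (1+y) := by positivity
    rw [norm_neg, norm_div, Complex.norm_real, Real.norm_eq_abs,
      _root_.abs_of_nonneg (Real.rpow_nonneg hy0.le _), norm_pow]
    have hA : (0:ℝ) < ‖(y:ℂ)+μ‖ := lt_of_lt_of_le hpos hb
    rw [div_le_div_iff₀ (pow_pos hA 2) (by positivity)]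
    have h2 : (c/2*(1+y))^2 ≤ (‖(y:ℂ)+μ‖)^2 := by nlinarith
    nlinarith [Real.rpow_nonneg hy0.le (α-1), (norm_nonneg ((y:ℂ)+μ))]
  · rw [ae_restrict_iff' measurableSet_Ioi]
    refine Filter.Eventually.of_forall fun y hy => fun μ hμ => ?_
    have hy0 : (0:ℝ) < y := hy
    have h := HasDerivAt.div (hasDerivAt_const μ ((y ^ (α-1) : ℝ) : ℂ))
      ((hasDerivAt_id μ).const_add (y:ℂ)) (hne μ hμ y hy0.le)
    convert h using 1
    · rfl
    · rfl
    · simp only [id, zero_mul, zero_sub, mul_one, neg_div]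

lemma auxBeta {α : ℝ} (hα : α ∈ Ioo (0:ℝ) 1) :
    Complex.betaIntegral (α:ℂ) (1 - (α:ℂ)) = ↑Real.pi / Complex.sin (↑Real.pi * ↑α) := by
  obtain ⟨h0, h1⟩ := hα
  have hre1 : 0 < ((α:ℂ)).re := by simpa using h0
  have hre2 : 0 < ((1 : ℂ) - (α:ℂ)).re := by
    simp only [Complex.sub_re, Complex.one_re, Complex.ofReal_re]; linarith
  have h := Complex.Gamma_mul_Gamma_eq_betaIntegral hre1 hre2
  rw [show (α:ℂ) + (1 - (α:ℂ)) = 1 by ring, Complex.Gamma_one, one_mul] at h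
  rw [← h, Complex.Gamma_mul_Gamma_one_sub]

lemma auxSubst {α : ℝ} (hα : α ∈ Ioo (0:ℝ) 1) :
    ∫ u in Ioi (0:ℝ), ((u ^ (α-1) : ℝ) : ℂ) / (1 + (u:ℂ)) =
      Complex.betaIntegral (α:ℂ) (1 - (α:ℂ)) := by
  obtain ⟨h0, h1⟩ := hα
  set g : ℝ → ℂ := fun x => (x:ℂ) ^ ((α:ℂ)-1) * ((1:ℂ)-(x:ℂ)) ^ (-(α:ℂ)) with hg
  set f : ℝ → ℝ := fun u => u / (1+u) with hf
  set f' : ℝ → ℝ := fun u => ((1+u)^2)⁻¹ with hf'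
  have hderiv : ∀ u ∈ Ioi (0:ℝ), HasDerivWithinAt f (f' u) (Ioi 0) u := by
    intro u hu
    have hu0 : (0:ℝ) < u := hu
    have h1u : (0:ℝ) < 1 + u := by linarith
    have hA : HasDerivAt (fun y : ℝ => y) 1 u := hasDerivAt_id u
    have hB : HasDerivAt (fun y : ℝ => 1 + y) 1 u := hA.const_add 1
    have h := hA.div hB h1u.ne'
    have heq : (1 * (1+u) - u * 1) / (1+u)^2 = f' u := by rw [hf']; field_simp; ring
    rw [heq] at h
    exact h.hasDerivWithinAt
  have hinj : InjOn f (Ioi 0) := by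
    intro u hu v hv h
    have hu0 : (0:ℝ) < u := hu
    have hv0 : (0:ℝ) < v := hv
    have h1u : (0:ℝ) < 1 + u := by linarith
    have h1v : (0:ℝ) < 1 + v := by linarith
    rw [hf] at h
    field_simp at h
    linarith
  have himg : f '' (Ioi 0) = Ioo (0:ℝ) 1 := by
    ext x
    constructor
    · rintro ⟨u, hu, rfl⟩
      have hu0 : (0:ℝ) < u := hu
      have h1u : (0:ℝ) < 1 + u := by linarith
      exact ⟨by positivity, by rw [hf]; rw [div_lt_one h1u]; linarith⟩
    · rintro ⟨hx0, hx1⟩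
      have hx1' : (0:ℝ) < 1 - x := by linarith
      refine ⟨x / (1-x), by simp only [mem_Ioi]; positivity, ?_⟩
      rw [hf]
      field_simp
      ring
  have key := integral_image_eq_integral_abs_deriv_smul measurableSet_Ioi hderiv hinj g
  rw [himg] at key
  -- identify betaIntegral with ∫ over Ioo 0 1 of g
  have hbeta : Complex.betaIntegral (α:ℂ) (1 - (α:ℂ)) = ∫ x in Ioo (0:ℝ) 1, g x := by
    rw [Complex.betaIntegral, intervalIntegral.integral_of_le zero_le_one,
      integral_Ioc_eq_integral_Ioo]
    refine setIntegral_congr_fun measurableSet_Ioo fun x hx => ?_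
    rw [hg]
    norm_num
  rw [hbeta, key]
  refine setIntegral_congr_fun measurableSet_Ioi fun u hu => ?_
  have hu0 : (0:ℝ) < u := hu
  have h1u : (0:ℝ) < 1 + u := by linarith
  have hfu : (0:ℝ) ≤ f u := by rw [hf]; positivity
  have hval1 : ((f u : ℝ):ℂ) ^ ((α:ℂ)-1) = (((f u) ^ (α-1) : ℝ) : ℂ) := by
    rw [show ((α:ℂ)-1) = ((α - 1 : ℝ) : ℂ) by push_cast; ring, ← Complex.ofReal_cpow hfu]
  have h2 : (1:ℂ) - ((f u : ℝ):ℂ) = (((1+u)⁻¹ : ℝ) : ℂ) := by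
    have hC : ((1+u:ℝ):ℂ) ≠ 0 := Complex.ofReal_ne_zero.mpr h1u.ne'
    rw [hf]
    push_cast at hC ⊢
    field_simp
    ring
  have hval2 : ((1:ℂ) - ((f u : ℝ):ℂ)) ^ (-(α:ℂ)) = ((((1+u)⁻¹) ^ (-α) : ℝ) : ℂ) := by
    rw [h2, show (-(α:ℂ)) = ((-α : ℝ) : ℂ) by push_cast; ring,
      ← Complex.ofReal_cpow (by positivity)]
  have hreal : |f' u| * ((f u) ^ (α-1) * (((1+u)⁻¹) ^ (-α))) = u ^ (α-1) / (1+u) := by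
    rw [hf', hf, _root_.abs_of_nonneg (by positivity)]
    rw [Real.div_rpow hu0.le h1u.le, Real.inv_rpow h1u.le, Real.rpow_neg h1u.le α, inv_inv]
    have e1 : (1+u:ℝ)^α = (1+u)^(α-1) * (1+u) := by
      rw [← Real.rpow_add_one h1u.ne']; ring_nf
    rw [e1]
    have hpow : (0:ℝ) < (1+u)^(α-1) := Real.rpow_pos_of_pos h1u _
    field_simp
  calc ((u ^ (α-1) : ℝ) : ℂ) / (1 + (u:ℂ))
      = ((u ^ (α-1) / (1+u) : ℝ) : ℂ) := by push_cast; ring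
    _ = ((|f' u| * ((f u) ^ (α-1) * (((1+u)⁻¹) ^ (-α))) : ℝ) : ℂ) := by rw [hreal]
    _ = |f' u| • g (f u) := by
        rw [hg]
        simp only [real_smul]
        rw [hval1, hval2]
        push_cast
        ring

lemma auxScale {α : ℝ} (hα : α ∈ Ioo (0:ℝ) 1) {x : ℝ} (hx : 0 < x) :
    ∫ y in Ioi (0:ℝ), ((y ^ (α-1) : ℝ) : ℂ) / ((y:ℂ) + (x:ℂ)) =
      ((x ^ (α-1) : ℝ) : ℂ) * ∫ u in Ioi (0:ℝ), ((u ^ (α-1) : ℝ) : ℂ) / (1 + (u:ℂ)) := by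
  have hxC : (x:ℂ) ≠ 0 := Complex.ofReal_ne_zero.mpr hx.ne'
  have step := integral_comp_mul_left_Ioi
    (fun y : ℝ => ((y ^ (α-1) : ℝ) : ℂ) / ((y:ℂ) + (x:ℂ))) 0 hx
  rw [mul_zero] at step
  have congr1 : (∫ u in Ioi (0:ℝ),
      (fun y : ℝ => ((y ^ (α-1) : ℝ) : ℂ) / ((y:ℂ) + (x:ℂ))) (x*u))
      = ∫ u in Ioi (0:ℝ),
        (((x ^ (α-1) : ℝ) : ℂ) * ((x:ℂ))⁻¹) * (((u ^ (α-1) : ℝ) : ℂ) / (1 + (u:ℂ))) := by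
    refine setIntegral_congr_fun measurableSet_Ioi fun u hu => ?_
    have hu0 : (0:ℝ) < u := hu
    have huC : (1:ℂ) + (u:ℂ) ≠ 0 := by
      have h' : ((1+u:ℝ):ℂ) ≠ 0 := Complex.ofReal_ne_zero.mpr (by linarith)
      push_cast at h'
      exact h'
    simp only
    rw [Real.mul_rpow hx.le hu0.le]
    push_cast
    have hne : (x:ℂ)*↑u+↑x ≠ 0 := by
      rw [show (x:ℂ)*↑u+↑x = ↑x*(1+↑u) from by ring]
      exact mul_ne_zero hxC huC
    field_simp
    rw [add_comm (u:ℂ) 1, mul_div_assoc, div_self huC, mul_one]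
  rw [congr1, MeasureTheory.integral_const_mul] at step
  have step2 := congrArg (fun z => (x : ℝ) • z) step
  simp only [smul_smul, mul_inv_cancel₀ hx.ne', one_smul] at step2
  have final : (∫ y in Ioi (0:ℝ), ((y ^ (α-1) : ℝ) : ℂ) / ((y:ℂ) + (x:ℂ)))
      = (x : ℝ) • (((x ^ (α-1) : ℝ) : ℂ) * ((x:ℂ))⁻¹ *
          ∫ u in Ioi (0:ℝ), ((u ^ (α-1) : ℝ) : ℂ) / (1 + (u:ℂ))) := step2.symm
  rw [final, real_smul]
  field_simp

lemma auxPreconn : IsPreconnected Complex.slitPlane := by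
  have h1 : Complex.slitPlane.Nonempty := ⟨1, Complex.one_mem_slitPlane⟩
  have := Complex.starConvex_one_slitPlane.contractibleSpace h1
  exact isPreconnected_iff_preconnectedSpace.mpr inferInstance

lemma auxId {α : ℝ} (hα : α ∈ Ioo (0:ℝ) 1) {μ : ℂ} (hμ : μ ∈ Complex.slitPlane) :
    ∫ y in Ioi (0:ℝ), ((y ^ (α-1) : ℝ) : ℂ) / ((y:ℂ) + μ) =
      (↑Real.pi / Complex.sin (↑Real.pi * ↑α)) * μ ^ ((α:ℂ)-1) := by
  set F : ℂ → ℂ := fun μ => ∫ y in Ioi (0:ℝ), ((y ^ (α-1) : ℝ) : ℂ) / ((y:ℂ) + μ) with hF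
  set G : ℂ → ℂ := fun μ => (↑Real.pi / Complex.sin (↑Real.pi * ↑α)) * μ ^ ((α:ℂ)-1) with hG
  have hFd : DifferentiableOn ℂ F Complex.slitPlane :=
    fun μ₀ hμ₀ => (auxE hα hμ₀).differentiableWithinAt
  have hFa : AnalyticOnNhd ℂ F Complex.slitPlane :=
    hFd.analyticOnNhd Complex.isOpen_slitPlane
  have hGa : AnalyticOnNhd ℂ G Complex.slitPlane := by
    refine DifferentiableOn.analyticOnNhd (fun μ₀ hμ₀ => ?_) Complex.isOpen_slitPlane
    exact (((differentiableAt_id.cpow (differentiableAt_const _) hμ₀)).const_mul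
      _).differentiableWithinAt
  have hRe : ∀ x : ℝ, 0 < x → F (x:ℂ) = G (x:ℂ) := by
    intro x hx
    rw [hF, hG]
    simp only
    rw [auxScale hα hx, auxSubst hα, auxBeta hα]
    rw [show ((α:ℂ)-1) = ((α - 1 : ℝ) : ℂ) by push_cast; ring, ← Complex.ofReal_cpow hx.le]
    ring
  have hfreq : ∃ᶠ z in nhdsWithin (1:ℂ) {(1:ℂ)}ᶜ, F z = G z := by
    have htend : Filter.Tendsto (fun n : ℕ => ((1 + (n+1:ℝ)⁻¹ : ℝ) : ℂ)) Filter.atTop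
        (nhdsWithin (1:ℂ) {(1:ℂ)}ᶜ) := by
      rw [tendsto_nhdsWithin_iff]
      constructor
      · have : Filter.Tendsto (fun n : ℕ => (1 + (n+1:ℝ)⁻¹ : ℝ)) Filter.atTop (nhds 1) := by
          have := tendsto_one_div_add_atTop_nhds_zero_nat (𝕜 := ℝ)
          simp only [one_div] at this
          simpa using (tendsto_const_nhds (x := (1:ℝ))).add this
        have hcont := Complex.continuous_ofReal.continuousAt (x := (1:ℝ))
        have := hcont.tendsto.comp this
        simpa [Function.comp_def] using this
      · refine Filter.Eventually.of_forall fun n => ?_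
        simp only [Set.mem_compl_iff, Set.mem_singleton_iff]
        intro h
        have h' : (1 + (n+1:ℝ)⁻¹ : ℝ) = 1 := by exact_mod_cast h
        have : ((n:ℝ)+1)⁻¹ > 0 := by positivity
        linarith
    refine htend.frequently (Filter.Frequently.of_forall fun n => ?_)
    exact hRe _ (by positivity)
  have heq := hFa.eqOn_of_preconnected_of_frequently_eq hGa auxPreconn
    Complex.one_mem_slitPlane hfreq
  exact heq hμ

/-- The diffusive-representation identity
`(sin(απ)/π) · ∫_ℝ |ξ|^{2α−1}/(ξ² + η + λ) dξ = (λ + η)^{α−1}`. -/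
theorem stmt_0 (α η : ℝ) (hα : α ∈ Set.Ioo (0 : ℝ) 1) (hη : 0 ≤ η) (lam : ℂ)
    (hlam : 0 < lam.re + η ∨ lam.im ≠ 0) :
    Integrable (fun ξ : ℝ => ((|ξ| ^ (2 * α - 1) : ℝ) : ℂ) / ((ξ : ℂ) ^ 2 + (η : ℂ) + lam)) ∧
      ((Real.sin (α * Real.pi) / Real.pi : ℝ) : ℂ) *
          (∫ ξ : ℝ, ((|ξ| ^ (2 * α - 1) : ℝ) : ℂ) / ((ξ : ℂ) ^ 2 + (η : ℂ) + lam)) =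
        (lam + (η : ℂ)) ^ ((α : ℂ) - 1) := by
  obtain ⟨hα0, hα1⟩ := hα
  have hαmem : α ∈ Ioo (0:ℝ) 1 := ⟨hα0, hα1⟩
  set μ : ℂ := lam + (η:ℂ) with hμdef
  have hμ : μ ∈ Complex.slitPlane := by
    rw [Complex.mem_slitPlane_iff]
    rcases hlam with h | h
    · left; simpa [hμdef] using h
    · right; simpa [hμdef] using h
  obtain ⟨c, hc, hbd⟩ := auxA hμ
  set f : ℝ → ℂ := fun ξ => ((|ξ| ^ (2 * α - 1) : ℝ) : ℂ) / ((ξ : ℂ) ^ 2 + (η : ℂ) + lam)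
    with hfdef
  have hden : ∀ ξ : ℝ, (ξ : ℂ) ^ 2 + (η : ℂ) + lam = ((ξ^2 : ℝ) : ℂ) + μ := by
    intro ξ; rw [hμdef]; push_cast; ring
  have hbd2 : ∀ ξ : ℝ, c * (1 + ξ^2) ≤ ‖((ξ^2:ℝ):ℂ) + μ‖ := fun ξ =>
    hbd (ξ^2) (sq_nonneg ξ)
  have hfe : ∀ ξ : ℝ, f (-ξ) = f ξ := by
    intro ξ
    rw [hfdef]
    simp only [abs_neg]
    push_cast
    ring_nf
  have hnorm : ∀ ξ : ℝ, 0 < ξ →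
      ‖f ξ‖ = ξ ^ (2*α-1) / ‖((ξ^2:ℝ):ℂ) + μ‖ := by
    intro ξ hξ
    rw [hfdef]
    simp only
    rw [hden ξ, norm_div, Complex.norm_real, Real.norm_eq_abs,
      _root_.abs_of_nonneg (Real.rpow_nonneg (abs_nonneg ξ) _), _root_.abs_of_pos hξ]
  -- integrability on `Ioi 0`
  have hIoi : IntegrableOn f (Ioi 0) := by
    refine auxB (by rw [hfdef]; apply Measurable.aestronglyMeasurable; fun_prop)
      (C := c⁻¹) (a := 2*α-1) (b := 2*α-3) (by linarith) (by linarith) ?_ ?_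
    · intro ξ hξ
      rw [hnorm ξ hξ.1]
      have h1 : c * 1 ≤ ‖((ξ^2:ℝ):ℂ) + μ‖ :=
        le_trans (by nlinarith [sq_nonneg ξ]) (hbd2 ξ)
      rw [div_le_iff₀ (by linarith), inv_mul_eq_div, div_mul_eq_mul_div, le_div_iff₀ hc]
      nlinarith [Real.rpow_nonneg hξ.1.le (2*α-1)]
    · intro ξ (hξ : 1 < ξ)
      have hξ0 : (0:ℝ) < ξ := by linarith
      rw [hnorm ξ hξ0]
      have h1 : c * ξ^2 ≤ ‖((ξ^2:ℝ):ℂ) + μ‖ :=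
        le_trans (by nlinarith) (hbd2 ξ)
      have habs : (0:ℝ) < ‖((ξ^2:ℝ):ℂ) + μ‖ :=
        lt_of_lt_of_le (by positivity) h1
      rw [div_le_iff₀ habs, inv_mul_eq_div, div_mul_eq_mul_div, le_div_iff₀ hc]
      have hee : ξ ^ (2*α-3) * ξ^2 = ξ ^ (2*α-1) := by
        rw [← Real.rpow_natCast ξ 2, ← Real.rpow_add hξ0]; ring_nf
      calc ξ ^ (2*α-1) * c = c * (ξ ^ (2*α-3) * ξ^2) := by rw [hee]; ring
      _ ≤ ξ ^ (2*α-3) * ‖((ξ^2:ℝ):ℂ) + μ‖ := by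
          nlinarith [Real.rpow_nonneg hξ0.le (2*α-3)]
  -- integrability on `Iic 0` by reflection
  have hIic : IntegrableOn f (Iic 0) := by
    rw [← Measure.map_neg_eq_self (volume : Measure ℝ)]
    have m : MeasurableEmbedding fun x : ℝ => -x :=
      (Homeomorph.neg ℝ).measurableEmbedding
    rw [m.integrableOn_map_iff]
    simp_rw [Function.comp_def, hfe, neg_preimage, neg_Iic, neg_zero]
    exact (integrableOn_Ici_iff_integrableOn_Ioi enorm_ne_top).mpr hIoi
  have hInt : Integrable f := by
    have hu := hIic.union hIoi
    rw [Iic_union_Ioi] at hu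
    rwa [integrableOn_univ] at hu
  refine ⟨hInt, ?_⟩
  -- split the integral
  have hIicInt : ∫ ξ in Iic (0:ℝ), f ξ = ∫ ξ in Ioi (0:ℝ), f ξ := by
    have h := integral_comp_neg_Ioi (0:ℝ) f
    rw [neg_zero] at h
    rw [← h]
    exact setIntegral_congr_fun measurableSet_Ioi fun ξ _ => hfe ξ
  have hsplit : ∫ ξ, f ξ = (2:ℝ) • ∫ ξ in Ioi (0:ℝ), f ξ := by
    rw [← intervalIntegral.integral_Iic_add_Ioi hIic hIoi, hIicInt, two_smul]
  -- substitution y = ξ²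
  have key := integral_comp_rpow_Ioi_of_pos
    (g := fun y : ℝ => ((y ^ (α-1) : ℝ) : ℂ) / ((y:ℂ) + μ)) (p := (2:ℝ)) two_pos
  have hpt : ∀ x : ℝ, x ∈ Ioi (0:ℝ) →
      ((2:ℝ) * x ^ ((2:ℝ)-1)) •
        (fun y : ℝ => ((y ^ (α-1) : ℝ) : ℂ) / ((y:ℂ) + μ)) (x ^ (2:ℝ)) = (2:ℝ) • f x := by
    intro x hx
    have hx0 : (0:ℝ) < x := hx
    have hx2 : x ^ ((2:ℝ)) = x^2 := by
      rw [show ((2:ℝ)) = ((2:ℕ):ℝ) by norm_num, Real.rpow_natCast]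
    have e2 : (x^2) ^ (α-1) * x = x ^ (2*α-1) := by
      rw [← hx2, ← Real.rpow_mul hx0.le, ← Real.rpow_add_one hx0.ne']
      ring_nf
    rw [hfdef]
    simp only
    rw [hden x, show ((2:ℝ)-1) = (1:ℝ) by norm_num, Real.rpow_one, hx2,
      _root_.abs_of_pos hx0, real_smul, real_smul, ← e2]
    push_cast
    ring
  rw [setIntegral_congr_fun measurableSet_Ioi hpt, integral_smul] at key
  -- evaluate via the analytic continuation identity
  have hval := auxId hαmem hμ
  -- final computation
  have hsin : Real.sin (α * Real.pi) ≠ 0 := by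
    have h1 : 0 < α * Real.pi := by positivity
    have h2 : α * Real.pi < Real.pi := by nlinarith [Real.pi_pos]
    exact (Real.sin_pos_of_pos_of_lt_pi h1 h2).ne'
  have hsinC : Complex.sin (↑Real.pi * ↑α) ≠ 0 := by
    rw [show (↑Real.pi * (α:ℂ)) = ((α * Real.pi : ℝ) : ℂ) by push_cast; ring,
      ← Complex.ofReal_sin]
    exact Complex.ofReal_ne_zero.mpr hsin
  have hπ : (Real.pi : ℂ) ≠ 0 := Complex.ofReal_ne_zero.mpr Real.pi_ne_zero
  have hint2 : ∫ ξ, f ξ = (↑Real.pi / Complex.sin (↑Real.pi * ↑α)) * μ ^ ((α:ℂ)-1) := by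
    rw [hsplit]
    have : (2:ℝ) • ∫ ξ in Ioi (0:ℝ), f ξ =
        ∫ y in Ioi (0:ℝ), ((y ^ (α-1) : ℝ) : ℂ) / ((y:ℂ) + μ) := key
    rw [this, hval]
  calc ((Real.sin (α * Real.pi) / Real.pi : ℝ) : ℂ) * (∫ ξ : ℝ, f ξ)
      = ((Real.sin (α * Real.pi) / Real.pi : ℝ) : ℂ) *
          ((↑Real.pi / Complex.sin (↑Real.pi * ↑α)) * μ ^ ((α:ℂ)-1)) := by rw [hint2]
    _ = μ ^ ((α:ℂ)-1) := by
        rw [Complex.ofReal_div,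
          show ((Real.sin (α * Real.pi)):ℂ) = Complex.sin (↑Real.pi * ↑α) from by
            rw [show (↑Real.pi * (α:ℂ)) = ((α * Real.pi : ℝ) : ℂ) by push_cast; ring,
              ← Complex.ofReal_sin]]
        field_simp
    _ = (lam + (η : ℂ)) ^ ((α : ℂ) - 1) := by rw [hμdef]
end

section
/- Let ρ₁, ρ₂, k₁, k₂ be positive real constants satisfying condition (A₁) and let λ ∈ ℝ with λ ≠ 0. Suppose u : ℝ → ℂ is four times continuously differentiable on [0,1] and satisfies, for all x ∈ [0,1], u''''(x) + (ρ₂/k₂ + ρ₁/k₁)·λ²·u''(x) + (ρ₁ρ₂/(k₁k₂))·λ²·(λ² − k₁/ρ₂)·u(x) = 0, together with the boundary conditions u(0) = u''(0) = u(1) = u''(1) = 0 and u'''(1) + (ρ₁/k₁ + ρ₂/k₂)·λ²·u'(1) = 0. Then u(x) = 0 for all x ∈ [0,1]. -/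
/-- Condition (A₁) of the paper. -/
def condA1 (ρ₁ ρ₂ k₁ k₂ : ℝ) : Prop :=
  ∀ m₁ m₂ : ℤ, (m₁, m₂) ≠ (0, 0) →
    k₁ / ρ₂ ≠
      ((k₂ * (m₁ : ℝ) ^ 2 / ρ₂ - k₁ * (m₂ : ℝ) ^ 2 / ρ₁) *
          (k₁ * (m₁ : ℝ) ^ 2 / ρ₁ - k₂ * (m₂ : ℝ) ^ 2 / ρ₂) * Real.pi ^ 2) /
        ((k₁ / ρ₁ + k₂ / ρ₂) * ((m₁ : ℝ) ^ 2 + (m₂ : ℝ) ^ 2))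

open Set Complex


noncomputable def Lmat (μ : ℂ) : ℂ × ℂ →L[ℝ] ℂ × ℂ :=
  (ContinuousLinearMap.snd ℝ ℂ ℂ).prod (μ • ((ContinuousLinearMap.fst ℝ ℂ ℂ).restrictScalars ℝ))

theorem ode2_unique (μ : ℂ) {f g : ℝ → ℂ} (hf : ContDiff ℝ 2 f) (hg : ContDiff ℝ 2 g)
    (hfe : ∀ x ∈ Set.Icc (0:ℝ) 1, deriv (deriv f) x = μ * f x)
    (hge : ∀ x ∈ Set.Icc (0:ℝ) 1, deriv (deriv g) x = μ * g x)
    (h0 : f 0 = g 0) (h1 : deriv f 0 = deriv g 0) :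
    ∀ x ∈ Set.Icc (0:ℝ) 1, f x = g x := by
  have hf1 : Differentiable ℝ f := hf.differentiable (by norm_num)
  have hg1 : Differentiable ℝ g := hg.differentiable (by norm_num)
  have hf2 : ContDiff ℝ 1 (deriv f) := by
    have := (contDiff_succ_iff_deriv (n := 1)).mp (by exact_mod_cast hf)
    exact this.2.2
  have hg2 : ContDiff ℝ 1 (deriv g) := by
    have := (contDiff_succ_iff_deriv (n := 1)).mp (by exact_mod_cast hg)
    exact this.2.2
  have hf2' : Differentiable ℝ (deriv f) := hf2.differentiable (by norm_num)
  have hg2' : Differentiable ℝ (deriv g) := hg2.differentiable (by norm_num)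
  set F := fun t : ℝ => (f t, deriv f t) with hF
  set G := fun t : ℝ => (g t, deriv g t) with hG
  have key : ∀ t ∈ Set.Icc (0:ℝ) 1, F t = G t := by
    apply ODE_solution_unique (v := fun _ p => Lmat μ p) (K := ‖Lmat μ‖₊)
      (fun _ => (Lmat μ).lipschitz)
    · exact (hf1.continuous.prodMk hf2.continuous).continuousOn
    · intro t ht
      have h1 : HasDerivAt F (deriv f t, deriv (deriv f) t) t :=
        (hf1 t).hasDerivAt.prodMk (hf2' t).hasDerivAt
      have : deriv (deriv f) t = μ * f t := hfe t (Ico_subset_Icc_self ht)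
      rw [this] at h1
      exact h1.hasDerivWithinAt
    · exact (hg1.continuous.prodMk hg2.continuous).continuousOn
    · intro t ht
      have h1 : HasDerivAt G (deriv g t, deriv (deriv g) t) t :=
        (hg1 t).hasDerivAt.prodMk (hg2' t).hasDerivAt
      have : deriv (deriv g) t = μ * g t := hge t (Ico_subset_Icc_self ht)
      rw [this] at h1
      exact h1.hasDerivWithinAt
    · simp [hF, hG, h0, h1]
  intro x hx
  have := key x hx
  exact congrArg Prod.fst this

theorem hasDerivAt_cexp_lin (r : ℂ) (x : ℝ) :
    HasDerivAt (fun x : ℝ => Complex.exp (r * x)) (r * Complex.exp (r * x)) x := by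
  have h1 : HasDerivAt (fun x : ℝ => (x : ℂ)) 1 x := Complex.ofRealCLM.hasDerivAt
  have h2 : HasDerivAt (fun x : ℝ => r * (x : ℂ)) r x := by simpa using h1.const_mul r
  simpa [mul_comm] using h2.cexp

theorem sfun_deriv (r : ℂ) (x : ℝ) :
    HasDerivAt (fun x : ℝ => Complex.exp (r * x) - Complex.exp (-r * x))
      (r * Complex.exp (r * x) + r * Complex.exp (-r * x)) x := by
  have := (hasDerivAt_cexp_lin r x).sub (hasDerivAt_cexp_lin (-r) x)
  exact this.congr_deriv (by ring)

theorem sfun_deriv2 (r : ℂ) (x : ℝ) :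
    HasDerivAt (fun x : ℝ => r * Complex.exp (r * x) + r * Complex.exp (-r * x))
      (r ^ 2 * (Complex.exp (r * x) - Complex.exp (-r * x))) x := by
  have := ((hasDerivAt_cexp_lin r x).const_mul r).add ((hasDerivAt_cexp_lin (-r) x).const_mul r)
  exact this.congr_deriv (by ring)

theorem rep_exp (μ r : ℂ) (hr : r ^ 2 = μ) (hr0 : r ≠ 0) {f : ℝ → ℂ} (hf : ContDiff ℝ 2 f)
    (hfe : ∀ x ∈ Set.Icc (0:ℝ) 1, deriv (deriv f) x = μ * f x) (h0 : f 0 = 0) :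
    ∀ x ∈ Set.Icc (0:ℝ) 1,
      f x = deriv f 0 / (2 * r) * (Complex.exp (r * x) - Complex.exp (-r * x)) := by
  set d := deriv f 0 / (2 * r) with hd
  set g := fun x : ℝ => d * (Complex.exp (r * x) - Complex.exp (-r * x)) with hgdef
  have hg1 : ∀ x : ℝ, HasDerivAt g
      (d * (r * Complex.exp (r * (x:ℂ)) + r * Complex.exp (-r * (x:ℂ)))) x :=
    fun x => (sfun_deriv r x).const_mul d
  have hgd : deriv g =
      fun x : ℝ => d * (r * Complex.exp (r * (x:ℂ)) + r * Complex.exp (-r * (x:ℂ))) :=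
    funext fun x => (hg1 x).deriv
  have hg2 : ∀ x : ℝ, deriv (deriv g) x = μ * g x := by
    intro x
    rw [hgd]
    have := ((sfun_deriv2 r x).const_mul d).deriv
    rw [this, hgdef, hr]
    ring
  have hgC : ContDiff ℝ 2 g := by
    have : ContDiff ℝ 2 (fun x : ℝ => Complex.exp (r * x)) := by
      apply Complex.contDiff_exp.comp
      exact (contDiff_const.mul Complex.ofRealCLM.contDiff)
    have h2 : ContDiff ℝ 2 (fun x : ℝ => Complex.exp (-r * x)) := by
      apply Complex.contDiff_exp.comp
      exact (contDiff_const.mul Complex.ofRealCLM.contDiff)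
    exact contDiff_const.mul (this.sub h2)
  apply ode2_unique μ hf hgC hfe (fun x _ => hg2 x)
  · simp [hgdef, h0]
  · rw [hgd]
    simp only [hgdef]
    rw [hd]
    field_simp
    simp only [Complex.ofReal_zero, mul_zero, neg_zero, Complex.exp_zero]
    ring

/-- representation for μ = 0 -/

theorem rep_lin {f : ℝ → ℂ} (hf : ContDiff ℝ 2 f)
    (hfe : ∀ x ∈ Set.Icc (0:ℝ) 1, deriv (deriv f) x = 0) (h0 : f 0 = 0) :
    ∀ x ∈ Set.Icc (0:ℝ) 1, f x = deriv f 0 * x := by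
  set g := fun x : ℝ => deriv f 0 * (x : ℂ) with hgdef
  have hg1 : ∀ x : ℝ, HasDerivAt g (deriv f 0) x := by
    intro x
    simpa using (Complex.ofRealCLM.hasDerivAt (x := x)).const_mul (deriv f 0)
  have hgd : deriv g = fun _ => deriv f 0 := funext fun x => (hg1 x).deriv
  apply ode2_unique 0 hf (by exact contDiff_const.mul Complex.ofRealCLM.contDiff)
    (by intro x hx; rw [hfe x hx]; ring) (by intro x _; rw [hgd]; simp)
  · simp [hgdef, h0]
  · rw [hgd]

theorem deriv_one_eq {f g : ℝ → ℂ} (hf : DifferentiableAt ℝ f 1) (hg : DifferentiableAt ℝ g 1)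
    (h : ∀ x ∈ Set.Icc (0:ℝ) 1, f x = g x) : deriv f 1 = deriv g 1 := by
  have hu : UniqueDiffWithinAt ℝ (Set.Icc (0:ℝ) 1) 1 :=
    (uniqueDiffOn_Icc (by norm_num)) 1 (by norm_num)
  have A : HasDerivWithinAt f (deriv f 1) (Set.Icc (0:ℝ) 1) 1 :=
    hf.hasDerivAt.hasDerivWithinAt
  have B : HasDerivWithinAt g (deriv g 1) (Set.Icc (0:ℝ) 1) 1 :=
    hg.hasDerivAt.hasDerivWithinAt
  have B' : HasDerivWithinAt f (deriv g 1) (Set.Icc (0:ℝ) 1) 1 :=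
    B.congr (fun x hx => h x hx) (h 1 (by norm_num))
  exact hu.eq_deriv _ A B'

theorem alg1 (ρ₁ ρ₂ k₁ k₂ : ℝ) (hρ₁ : 0 < ρ₁) (hρ₂ : 0 < ρ₂) (hk₁ : 0 < k₁) (hk₂ : 0 < k₂)
    (lam : ℝ) (hlam : lam ≠ 0) (M N : ℝ) (hS : 0 < M + N)
    (ha : (ρ₂ / k₂ + ρ₁ / k₁) * lam ^ 2 = (M + N) * Real.pi ^ 2)
    (hb : (ρ₁ * ρ₂ / (k₁ * k₂)) * lam ^ 2 * (lam ^ 2 - k₁ / ρ₂) = M * N * Real.pi ^ 4) :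
    k₁ / ρ₂ =
      ((k₂ * M / ρ₂ - k₁ * N / ρ₁) * (k₁ * M / ρ₁ - k₂ * N / ρ₂) * Real.pi ^ 2) /
        ((k₁ / ρ₁ + k₂ / ρ₂) * (M + N)) := by
  have hl2 : 0 < lam ^ 2 := by positivity
  have hA : (0:ℝ) < ρ₂ * k₁ + ρ₁ * k₂ := by positivity
  have ht : lam ^ 2 = ((M + N) * Real.pi ^ 2 * k₁ * k₂) / (ρ₂ * k₁ + ρ₁ * k₂) := by
    field_simp at ha ⊢
    linear_combination ha
  have key : k₁ / ρ₂ = lam ^ 2 - M * N * Real.pi ^ 4 * k₁ * k₂ / (ρ₁ * ρ₂ * lam ^ 2) := by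
    field_simp at hb ⊢
    linear_combination -hb
  rw [key, ht]
  have hReal.pi : (0:ℝ) < Real.pi := Real.pi_pos
  field_simp
  ring

theorem root_zero {v : ℝ → ℂ} (hv : ContDiff ℝ 2 v)
    (hve : ∀ x ∈ Set.Icc (0:ℝ) 1, deriv (deriv v) x = 0)
    (h0 : v 0 = 0) (h1 : v 1 = 0) : ∀ x ∈ Set.Icc (0:ℝ) 1, v x = 0 := by
  have hrep := rep_lin hv hve h0
  have : deriv v 0 = 0 := by
    have := hrep 1 (by norm_num)
    rw [h1] at this
    simpa using this.symm
  intro x hx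
  rw [hrep x hx, this, zero_mul]

theorem root_dich (μ : ℝ) (hμ0 : μ ≠ 0) {v : ℝ → ℂ} (hv : ContDiff ℝ 2 v)
    (hve : ∀ x ∈ Set.Icc (0:ℝ) 1, deriv (deriv v) x = (μ:ℂ) * v x)
    (h0 : v 0 = 0) (h1 : v 1 = 0) :
    (∀ x ∈ Set.Icc (0:ℝ) 1, v x = 0) ∨
      ((∃ m : ℤ, m ≠ 0 ∧ μ = -((m:ℝ)^2 * Real.pi^2)) ∧
        (deriv v 1 = 0 → ∀ x ∈ Set.Icc (0:ℝ) 1, v x = 0)) := by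
  obtain ⟨r, hr⟩ : ∃ r : ℂ, r ^ 2 = (μ:ℂ) := by
    rcases lt_or_gt_of_ne hμ0 with h | h
    · refine ⟨Real.sqrt (-μ) * Complex.I, ?_⟩
      rw [mul_pow, Complex.I_sq, ← Complex.ofReal_pow, Real.sq_sqrt (by linarith)]
      push_cast; ring
    · refine ⟨(Real.sqrt μ : ℂ), ?_⟩
      rw [← Complex.ofReal_pow, Real.sq_sqrt h.le]
  have hr0 : r ≠ 0 := by
    intro h
    rw [h] at hr
    simp at hr
    exact hμ0 (by exact_mod_cast hr.symm)
  have hrep := rep_exp (μ:ℂ) r hr hr0 hv hve h0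
  by_cases hdv0 : deriv v 0 = 0
  · left
    intro x hx
    rw [hrep x hx, hdv0, zero_div, zero_mul]
  · right
    have hdz : deriv v 0 / (2 * r) ≠ 0 := by
      apply div_ne_zero hdv0
      simpa using hr0
    have h1' : deriv v 0 / (2 * r) * (Complex.exp (r * (1:ℝ)) - Complex.exp (-r * (1:ℝ))) = 0 := by
      rw [← hrep 1 (by norm_num), h1]
    have hee : Complex.exp r = Complex.exp (-r) := by
      have h2 := (mul_eq_zero.mp h1').resolve_left hdz
      have h3 := sub_eq_zero.mp h2
      norm_num at h3
      exact h3
    have hexp1 : Complex.exp (2 * r) = 1 := by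
      have h4 : Complex.exp (2 * r) = Complex.exp r * Complex.exp r := by
        rw [← Complex.exp_add]; ring_nf
      rw [h4]
      nth_rewrite 2 [hee]
      rw [← Complex.exp_add]
      simp
    obtain ⟨n, hn⟩ := Complex.exp_eq_one_iff.mp hexp1
    have hrn : r = (n : ℂ) * Real.pi * Complex.I := by
      linear_combination (1/2 : ℂ) * hn
    have hn0 : n ≠ 0 := by
      intro h
      rw [h] at hrn
      simp at hrn
      exact hr0 hrn
    have hμeq : μ = -((n:ℝ)^2 * Real.pi^2) := by
      have hc : (μ:ℂ) = ((-((n:ℝ)^2 * Real.pi^2) : ℝ) : ℂ) := by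
        rw [← hr, hrn, mul_pow, mul_pow, Complex.I_sq]
        push_cast; ring
      exact_mod_cast hc
    refine ⟨⟨n, hn0, hμeq⟩, ?_⟩
    intro hdv1
    exfalso
    have hg' := (sfun_deriv r (1:ℝ)).const_mul (deriv v 0 / (2 * r))
    have h1deq : deriv v 1 =
        deriv (fun x : ℝ => deriv v 0 / (2 * r) *
          (Complex.exp (r * x) - Complex.exp (-r * x))) 1 :=
      deriv_one_eq (hv.differentiable (by norm_num) 1) hg'.differentiableAt hrep
    rw [hg'.deriv] at h1deq
    have h5 : deriv v 0 / (2 * r) * (r * Complex.exp (r * (1:ℝ)) + r * Complex.exp (-r * (1:ℝ)))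
        = 0 := by rw [← h1deq]; exact hdv1
    norm_num at h5
    rw [hee] at h5
    rcases h5 with (h7 | h7) | h7
    · exact hdv0 h7
    · exact hr0 h7
    · have h8 : r * Complex.exp (-r) = 0 := by linear_combination (1/2 : ℂ) * h7
      rcases mul_eq_zero.mp h8 with h9 | h9
      · exact hr0 h9
      · exact Complex.exp_ne_zero _ h9

theorem v_ode (a bb μ : ℝ) (hμ : μ^2 + a*μ + bb = 0) {u : ℝ → ℂ} (hu : ContDiff ℝ 4 u)
    (heq' : ∀ x ∈ Set.Icc (0:ℝ) 1,
      deriv (deriv (deriv (deriv u))) x + (a:ℂ) * deriv (deriv u) x + (bb:ℂ) * u x = 0) :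
    ContDiff ℝ 2 (fun x => deriv (deriv u) x + ((a + μ : ℝ):ℂ) * u x) ∧
    (deriv (fun x => deriv (deriv u) x + ((a + μ : ℝ):ℂ) * u x)
       = fun x => deriv (deriv (deriv u)) x + ((a + μ : ℝ):ℂ) * deriv u x) ∧
    ∀ x ∈ Set.Icc (0:ℝ) 1,
      deriv (deriv (fun x => deriv (deriv u) x + ((a + μ : ℝ):ℂ) * u x)) x
        = (μ:ℂ) * (deriv (deriv u) x + ((a + μ : ℝ):ℂ) * u x) := by
  set c : ℂ := ((a + μ : ℝ):ℂ) with hc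
  have h4 : ContDiff ℝ ((1:ℕ) + (3:ℕ) : ℕ) u := by exact_mod_cast hu
  have h4' : ContDiff ℝ ((2:ℕ) + (2:ℕ) : ℕ) u := by exact_mod_cast hu
  have h4'' : ContDiff ℝ ((3:ℕ) + (1:ℕ) : ℕ) u := by exact_mod_cast hu
  have hit1 : deriv^[1] u = deriv u := rfl
  have hit2 : deriv^[2] u = deriv (deriv u) := by
    rw [Function.iterate_succ_apply', hit1]
  have hit3 : deriv^[3] u = deriv (deriv (deriv u)) := by
    rw [Function.iterate_succ_apply', hit2]
  have hu1C : ContDiff ℝ (3:ℕ) (deriv u) := by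
    have := ContDiff.iterate_deriv' 3 1 h4''; rwa [hit1] at this
  have hu2C : ContDiff ℝ (2:ℕ) (deriv (deriv u)) := by
    have := ContDiff.iterate_deriv' 2 2 h4'; rwa [hit2] at this
  have hu3C : ContDiff ℝ (1:ℕ) (deriv (deriv (deriv u))) := by
    have := ContDiff.iterate_deriv' 1 3 h4; rwa [hit3] at this
  have hud : Differentiable ℝ u := hu.differentiable (by norm_num)
  have hu1d : Differentiable ℝ (deriv u) := hu1C.differentiable (by norm_num)
  have hu2d : Differentiable ℝ (deriv (deriv u)) := hu2C.differentiable (by norm_num)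
  have hu3d : Differentiable ℝ (deriv (deriv (deriv u))) := hu3C.differentiable (by norm_num)
  have hvC : ContDiff ℝ 2 (fun x => deriv (deriv u) x + c * u x) := by
    have h1 : ContDiff ℝ 2 (deriv (deriv u)) := by exact_mod_cast hu2C
    exact h1.add (contDiff_const.mul (hu.of_le (by norm_num)))
  have hdv : deriv (fun x => deriv (deriv u) x + c * u x)
      = fun x => deriv (deriv (deriv u)) x + c * deriv u x := by
    funext x
    exact (((hu2d x).hasDerivAt).add (((hud x).hasDerivAt).const_mul c)).deriv
  refine ⟨hvC, hdv, ?_⟩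
  intro x hx
  rw [hdv]
  have hd2 : deriv (fun x => deriv (deriv (deriv u)) x + c * deriv u x) x
      = deriv (deriv (deriv (deriv u))) x + c * deriv (deriv u) x :=
    (((hu3d x).hasDerivAt).add (((hu1d x).hasDerivAt).const_mul c)).deriv
  rw [hd2]
  have hμc : (μ:ℂ)^2 + (a:ℂ)*(μ:ℂ) + (bb:ℂ) = 0 := by exact_mod_cast hμ
  have hE := heq' x hx
  rw [hc]
  push_cast
  linear_combination hE - (u x) * hμc


/-- The fourth-order scalar reduction of the kernel equation for the damped Timoshenko
operator has only the zero solution under condition (A₁), for `λ ≠ 0`. -/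
theorem stmt_4 (ρ₁ ρ₂ k₁ k₂ : ℝ) (hρ₁ : 0 < ρ₁) (hρ₂ : 0 < ρ₂) (hk₁ : 0 < k₁) (hk₂ : 0 < k₂)
    (hA1 : condA1 ρ₁ ρ₂ k₁ k₂) (lam : ℝ) (hlam : lam ≠ 0) (u : ℝ → ℂ)
    (hu : ContDiff ℝ 4 u)
    (heq : ∀ x ∈ Set.Icc (0 : ℝ) 1,
      iteratedDeriv 4 u x + ((ρ₂ / k₂ + ρ₁ / k₁ : ℝ) : ℂ) * (lam : ℂ) ^ 2 * iteratedDeriv 2 u x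
        + ((ρ₁ * ρ₂ / (k₁ * k₂) : ℝ) : ℂ) * (lam : ℂ) ^ 2 * ((lam : ℂ) ^ 2 - ((k₁ / ρ₂ : ℝ) : ℂ))
          * u x = 0)
    (hb1 : u 0 = 0) (hb2 : iteratedDeriv 2 u 0 = 0) (hb3 : u 1 = 0)
    (hb4 : iteratedDeriv 2 u 1 = 0)
    (hb5 : iteratedDeriv 3 u 1 + ((ρ₁ / k₁ + ρ₂ / k₂ : ℝ) : ℂ) * (lam : ℂ) ^ 2 * deriv u 1 = 0) :
    ∀ x ∈ Set.Icc (0 : ℝ) 1, u x = 0 := by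
  have hl2 : (0:ℝ) < lam ^ 2 := by positivity
  set a : ℝ := (ρ₂ / k₂ + ρ₁ / k₁) * lam ^ 2 with hadef
  set bb : ℝ := (ρ₁ * ρ₂ / (k₁ * k₂)) * lam ^ 2 * (lam ^ 2 - k₁ / ρ₂) with hbdef
  have hDval : a ^ 2 - 4 * bb = ((ρ₂/k₂ - ρ₁/k₁) * lam ^ 2) ^ 2 + 4 * (ρ₁/k₂) * lam ^ 2 := by
    rw [hadef, hbdef]; field_simp; ring
  have hD : 0 < a ^ 2 - 4 * bb := by rw [hDval]; positivity
  set s : ℝ := Real.sqrt (a ^ 2 - 4 * bb) with hsdef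
  have hspos : 0 < s := Real.sqrt_pos.mpr hD
  have hs2 : s ^ 2 = a ^ 2 - 4 * bb := Real.sq_sqrt hD.le
  set μ₁ : ℝ := (-a + s) / 2 with hμ₁def
  set μ₂ : ℝ := (-a - s) / 2 with hμ₂def
  have hq1 : μ₁ ^ 2 + a * μ₁ + bb = 0 := by rw [hμ₁def]; linear_combination hs2 / 4
  have hq2 : μ₂ ^ 2 + a * μ₂ + bb = 0 := by rw [hμ₂def]; linear_combination hs2 / 4
  have hμne : μ₁ ≠ μ₂ := by
    rw [hμ₁def, hμ₂def]; intro h; linarith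
  have hsum : μ₁ + μ₂ = -a := by rw [hμ₁def, hμ₂def]; ring
  have hprod : μ₁ * μ₂ = bb := by rw [hμ₁def, hμ₂def]; linear_combination -hs2 / 4
  -- rewrite iterated derivatives
  have hi2 : iteratedDeriv 2 u = deriv (deriv u) := by
    rw [show (2:ℕ) = 1 + 1 from rfl, iteratedDeriv_succ, iteratedDeriv_one]
  have hi3 : iteratedDeriv 3 u = deriv (deriv (deriv u)) := by
    rw [show (3:ℕ) = 2 + 1 from rfl, iteratedDeriv_succ, hi2]
  have hi4 : iteratedDeriv 4 u = deriv (deriv (deriv (deriv u))) := by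
    rw [show (4:ℕ) = 3 + 1 from rfl, iteratedDeriv_succ, hi3]
  rw [hi2] at hb2 hb4
  rw [hi3] at hb5
  have heq' : ∀ x ∈ Set.Icc (0:ℝ) 1,
      deriv (deriv (deriv (deriv u))) x + (a:ℂ) * deriv (deriv u) x + (bb:ℂ) * u x = 0 := by
    intro x hx
    have hE := heq x hx
    rw [hi4, hi2] at hE
    rw [hadef, hbdef]
    push_cast
    push_cast at hE
    linear_combination hE
  obtain ⟨hv1C, hv1d, hv1e⟩ := v_ode a bb μ₁ hq1 hu heq'
  obtain ⟨hv2C, hv2d, hv2e⟩ := v_ode a bb μ₂ hq2 hu heq'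
  set v₁ : ℝ → ℂ := fun x => deriv (deriv u) x + ((a + μ₁ : ℝ):ℂ) * u x with hv₁def
  set v₂ : ℝ → ℂ := fun x => deriv (deriv u) x + ((a + μ₂ : ℝ):ℂ) * u x with hv₂def
  have h10 : v₁ 0 = 0 := by rw [hv₁def]; simp [hb1, hb2]
  have h11 : v₁ 1 = 0 := by rw [hv₁def]; simp [hb3, hb4]
  have h20 : v₂ 0 = 0 := by rw [hv₂def]; simp [hb1, hb2]
  have h21 : v₂ 1 = 0 := by rw [hv₂def]; simp [hb3, hb4]
  have hacomm : ((ρ₁ / k₁ + ρ₂ / k₂ : ℝ) : ℂ) * (lam:ℂ) ^ 2 = ((a:ℝ):ℂ) := by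
    rw [hadef]; push_cast; ring
  have hdv11 : deriv v₁ 1 = ((μ₁:ℝ):ℂ) * deriv u 1 := by
    rw [hv1d]
    show deriv (deriv (deriv u)) 1 + ((a + μ₁ : ℝ):ℂ) * deriv u 1 = _
    push_cast
    push_cast at hb5 hacomm
    linear_combination hb5 - deriv u 1 * hacomm
  have hdv21 : deriv v₂ 1 = ((μ₂:ℝ):ℂ) * deriv u 1 := by
    rw [hv2d]
    show deriv (deriv (deriv u)) 1 + ((a + μ₂ : ℝ):ℂ) * deriv u 1 = _
    push_cast
    push_cast at hb5 hacomm
    linear_combination hb5 - deriv u 1 * hacomm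
  have hdone : (∀ x ∈ Set.Icc (0:ℝ) 1, v₁ x = 0) → (∀ x ∈ Set.Icc (0:ℝ) 1, v₂ x = 0) →
      ∀ x ∈ Set.Icc (0:ℝ) 1, u x = 0 := by
    intro P1 P2 x hx
    have hrec : v₁ x - v₂ x = ((μ₁ - μ₂ : ℝ):ℂ) * u x := by
      rw [hv₁def, hv₂def]; push_cast; ring
    rw [P1 x hx, P2 x hx, sub_zero] at hrec
    have hc : ((μ₁ - μ₂ : ℝ):ℂ) ≠ 0 :=
      Complex.ofReal_ne_zero.mpr (sub_ne_zero.mpr hμne)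
    rcases mul_eq_zero.mp hrec.symm with h | h
    · exact absurd h hc
    · exact h
  -- helper to conclude v₁' 1 = 0 from v₁ ≡ 0
  have hder0 : ∀ {v : ℝ → ℂ}, ContDiff ℝ 2 v → (∀ x ∈ Set.Icc (0:ℝ) 1, v x = 0) →
      deriv v 1 = 0 := by
    intro v hv P
    have h := deriv_one_eq (hv.differentiable (by norm_num) 1)
      ((differentiable_const (0:ℂ)) 1) (by intro x hx; simpa using P x hx)
    simpa using h
  -- contradiction builder from sine-type roots
  have habs : ∀ (m₁ m₂ : ℤ), m₁ ≠ 0 →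
      a = ((m₁:ℝ)^2 + (m₂:ℝ)^2) * Real.pi ^ 2 →
      bb = (m₁:ℝ)^2 * (m₂:ℝ)^2 * Real.pi ^ 4 → False := by
    intro m₁ m₂ hm₁ haa hbb
    have hm₁r : ((m₁:ℝ)) ≠ 0 := Int.cast_ne_zero.mpr hm₁
    have hS : 0 < (m₁:ℝ)^2 + (m₂:ℝ)^2 := by positivity
    have heqk := alg1 ρ₁ ρ₂ k₁ k₂ hρ₁ hρ₂ hk₁ hk₂ lam hlam ((m₁:ℝ)^2) ((m₂:ℝ)^2) hS
      (by rw [← hadef]; exact haa) (by rw [← hbdef]; exact hbb)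
    exact hA1 m₁ m₂ (by simp [hm₁]) heqk
  by_cases hb0 : bb = 0
  · -- one root is zero
    rcases mul_eq_zero.mp (hprod.trans hb0) with h0 | h0
    · -- μ₁ = 0, μ₂ = -a ≠ 0
      have hμ₂a : μ₂ = -a := by rw [← hsum, h0]; ring
      have hμ₂0 : μ₂ ≠ 0 := fun h => hμne (h0.trans h.symm)
      have P1 : ∀ x ∈ Set.Icc (0:ℝ) 1, v₁ x = 0 := by
        apply root_zero hv1C _ h10 h11
        intro x hx
        rw [hv1e x hx, h0]
        simp
      rcases root_dich μ₂ hμ₂0 hv2C hv2e h20 h21 with P2 | ⟨⟨m, hm, hμe⟩, H2⟩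
      · exact hdone P1 P2
      · exfalso
        apply habs m 0 hm
        · have : a = (m:ℝ)^2 * Real.pi^2 := by
            have := hμ₂a; rw [hμe] at this; linarith
          rw [this]; push_cast; ring
        · rw [hb0]; push_cast; ring
    · -- μ₂ = 0, μ₁ = -a ≠ 0
      have hμ₁a : μ₁ = -a := by rw [← hsum, h0]; ring
      have hμ₁0 : μ₁ ≠ 0 := fun h => hμne (h.trans h0.symm)
      have P2 : ∀ x ∈ Set.Icc (0:ℝ) 1, v₂ x = 0 := by
        apply root_zero hv2C _ h20 h21
        intro x hx
        rw [hv2e x hx, h0]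
        simp
      rcases root_dich μ₁ hμ₁0 hv1C hv1e h10 h11 with P1 | ⟨⟨m, hm, hμe⟩, H1⟩
      · exact hdone P1 P2
      · exfalso
        apply habs m 0 hm
        · have : a = (m:ℝ)^2 * Real.pi^2 := by
            have := hμ₁a; rw [hμe] at this; linarith
          rw [this]; push_cast; ring
        · rw [hb0]; push_cast; ring
  · -- both roots nonzero
    have hμ₁0 : μ₁ ≠ 0 := by
      intro h; apply hb0; rw [← hprod, h, zero_mul]
    have hμ₂0 : μ₂ ≠ 0 := by
      intro h; apply hb0; rw [← hprod, h, mul_zero]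
    rcases root_dich μ₁ hμ₁0 hv1C hv1e h10 h11 with P1 | ⟨⟨m₁, hm₁, hμ₁e⟩, H1⟩
    · rcases root_dich μ₂ hμ₂0 hv2C hv2e h20 h21 with P2 | ⟨⟨m₂, hm₂, hμ₂e⟩, H2⟩
      · exact hdone P1 P2
      · -- v₁ ≡ 0, v₂ sine type: use fifth boundary condition
        have hd1 : deriv v₁ 1 = 0 := hder0 hv1C P1
        have hu1 : deriv u 1 = 0 := by
          rw [hdv11] at hd1
          rcases mul_eq_zero.mp hd1 with h | h
          · exact absurd h (by simpa using hμ₁0)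
          · exact h
        have P2 : ∀ x ∈ Set.Icc (0:ℝ) 1, v₂ x = 0 :=
          H2 (by rw [hdv21, hu1, mul_zero])
        exact hdone P1 P2
    · rcases root_dich μ₂ hμ₂0 hv2C hv2e h20 h21 with P2 | ⟨⟨m₂, hm₂, hμ₂e⟩, H2⟩
      · -- v₂ ≡ 0, v₁ sine type
        have hd2 : deriv v₂ 1 = 0 := hder0 hv2C P2
        have hu1 : deriv u 1 = 0 := by
          rw [hdv21] at hd2
          rcases mul_eq_zero.mp hd2 with h | h
          · exact absurd h (by simpa using hμ₂0)
          · exact h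
        have P1 : ∀ x ∈ Set.Icc (0:ℝ) 1, v₁ x = 0 :=
          H1 (by rw [hdv11, hu1, mul_zero])
        exact hdone P1 P2
      · -- both sine type: contradiction with condition A₁
        exfalso
        apply habs m₁ m₂ hm₁
        · have := hsum; rw [hμ₁e, hμ₂e] at this; linarith
        · have := hprod; rw [hμ₁e, hμ₂e] at this; rw [← this]; ring
end

section
/- Let ρ₁, ρ₂, k₁, k₂ be positive real constants and let λ ∈ ℝ with λ > √(k₁/ρ₂). Let B be the real 4×4 matrix with rows (0, −1, 0, 0), (ρ₁λ²/k₁, 0, 0, 1), (0, 0, 0, −1) and (0, −k₁/k₂, ρ₂λ²/k₂ − k₁/k₂, 0). Set Δ = √((ρ₁/k₁ − ρ₂/k₂)²·λ² + 4ρ₁/k₂), μ₁ = √(((ρ₁/k₁ + ρ₂/k₂)·λ² − λΔ)/2), μ₂ = √(((ρ₁/k₁ + ρ₂/k₂)·λ² + λΔ)/2), M₁ = B·(B² + μ₂²·I), M₂ = B·(B² + μ₁²·I), M₃ = B² + μ₂²·I, M₄ = B² + μ₁²·I, where I is the 4×4 identity matrix. Then 0 < μ₁ < μ₂, and for every z ∈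 ℝ the matrix exponential satisfies exp(z·B) = (1/(λΔ))·[ (sin(μ₁z)/μ₁)·M₁ − (sin(μ₂z)/μ₂)·M₂ + cos(μ₁z)·M₃ − cos(μ₂z)·M₄ ]. -/
open Matrix

/-- The coefficient matrix `B` of the first-order reformulation `Y_x = −B·Y`
of the Timoshenko eigenvalue system. -/
noncomputable def Bmat (ρ₁ ρ₂ k₁ k₂ lam : ℝ) : Matrix (Fin 4) (Fin 4) ℝ :=
  !![0, -1, 0, 0;
     ρ₁ * lam ^ 2 / k₁, 0, 0, 1;
     0, 0, 0, -1;
     0, -k₁ / k₂, ρ₂ * lam ^ 2 / k₂ - k₁ / k₂, 0]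

lemma gen_sq (a b c : ℝ) :
    (!![0,-1,0,0; a,0,0,1; 0,0,0,-1; 0,-b,c,0] : Matrix (Fin 4) (Fin 4) ℝ) ^ 2 =
    !![-a,0,0,-1; 0,-(a+b),c,0; 0,b,-c,0; -(a*b),0,0,-(b+c)] := by
  rw [sq]
  ext i j
  fin_cases i <;> fin_cases j <;>
    simp [Matrix.mul_apply, Fin.sum_univ_four, Matrix.vecHead, Matrix.vecTail] <;> ring

set_option maxHeartbeats 1000000 in
lemma gen_cayley (a b c : ℝ) :
    (!![0,-1,0,0; a,0,0,1; 0,0,0,-1; 0,-b,c,0] : Matrix (Fin 4) (Fin 4) ℝ) ^ 4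
      + (a+b+c) • (!![0,-1,0,0; a,0,0,1; 0,0,0,-1; 0,-b,c,0] : Matrix (Fin 4) (Fin 4) ℝ) ^ 2
      + (a*c) • (1 : Matrix (Fin 4) (Fin 4) ℝ) = 0 := by
  have h4 : (!![0,-1,0,0; a,0,0,1; 0,0,0,-1; 0,-b,c,0] : Matrix (Fin 4) (Fin 4) ℝ) ^ 4
      = (!![0,-1,0,0; a,0,0,1; 0,0,0,-1; 0,-b,c,0] : Matrix (Fin 4) (Fin 4) ℝ) ^ 2
        * (!![0,-1,0,0; a,0,0,1; 0,0,0,-1; 0,-b,c,0] : Matrix (Fin 4) (Fin 4) ℝ) ^ 2 := by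
    rw [← pow_add]
  rw [h4, gen_sq]
  ext i j
  fin_cases i <;> fin_cases j <;>
    simp [Matrix.mul_apply, Fin.sum_univ_four, Matrix.one_apply, Matrix.add_apply,
      Matrix.smul_apply, Matrix.zero_apply, Matrix.vecHead, Matrix.vecTail, smul_eq_mul] <;>
    ring

lemma Bmat_eq (ρ₁ ρ₂ k₁ k₂ lam : ℝ) :
    Bmat ρ₁ ρ₂ k₁ k₂ lam =
      !![0,-1,0,0; ρ₁*lam^2/k₁,0,0,1; 0,0,0,-1; 0,-(k₁/k₂),ρ₂*lam^2/k₂-k₁/k₂,0] := by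
  rw [Bmat, neg_div]

lemma Bmat_cayley (ρ₁ ρ₂ k₁ k₂ lam : ℝ) (hk₁ : k₁ ≠ 0) (hk₂ : k₂ ≠ 0) :
    (Bmat ρ₁ ρ₂ k₁ k₂ lam)^4 + ((ρ₁/k₁+ρ₂/k₂)*lam^2) • (Bmat ρ₁ ρ₂ k₁ k₂ lam)^2
      + (ρ₁*lam^2*(ρ₂*lam^2-k₁)/(k₁*k₂)) • (1 : Matrix (Fin 4) (Fin 4) ℝ) = 0 := by
  have hs : (ρ₁/k₁+ρ₂/k₂)*lam^2 = ρ₁*lam^2/k₁ + k₁/k₂ + (ρ₂*lam^2/k₂-k₁/k₂) := by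
    field_simp; ring
  have hp : ρ₁*lam^2*(ρ₂*lam^2-k₁)/(k₁*k₂) = ρ₁*lam^2/k₁ * (ρ₂*lam^2/k₂-k₁/k₂) := by
    field_simp
  rw [Bmat_eq, hs, hp]
  exact gen_cayley _ _ _

/-- Sylvester expansion of the matrix exponential `exp(z·B)` using the eigenvalues
`±iμ₁`, `±iμ₂` of `B`. -/
theorem stmt_5 (ρ₁ ρ₂ k₁ k₂ lam : ℝ) (hρ₁ : 0 < ρ₁) (hρ₂ : 0 < ρ₂) (hk₁ : 0 < k₁)
    (hk₂ : 0 < k₂) (hlam : Real.sqrt (k₁ / ρ₂) < lam)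
    (Δ μ₁ μ₂ : ℝ)
    (hΔ : Δ = Real.sqrt ((ρ₁ / k₁ - ρ₂ / k₂) ^ 2 * lam ^ 2 + 4 * ρ₁ / k₂))
    (hμ₁ : μ₁ = Real.sqrt (((ρ₁ / k₁ + ρ₂ / k₂) * lam ^ 2 - lam * Δ) / 2))
    (hμ₂ : μ₂ = Real.sqrt (((ρ₁ / k₁ + ρ₂ / k₂) * lam ^ 2 + lam * Δ) / 2))
    (M₁ M₂ M₃ M₄ : Matrix (Fin 4) (Fin 4) ℝ)
    (hM₁ : M₁ = Bmat ρ₁ ρ₂ k₁ k₂ lam *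
      ((Bmat ρ₁ ρ₂ k₁ k₂ lam) ^ 2 + μ₂ ^ 2 • (1 : Matrix (Fin 4) (Fin 4) ℝ)))
    (hM₂ : M₂ = Bmat ρ₁ ρ₂ k₁ k₂ lam *
      ((Bmat ρ₁ ρ₂ k₁ k₂ lam) ^ 2 + μ₁ ^ 2 • (1 : Matrix (Fin 4) (Fin 4) ℝ)))
    (hM₃ : M₃ = (Bmat ρ₁ ρ₂ k₁ k₂ lam) ^ 2 + μ₂ ^ 2 • (1 : Matrix (Fin 4) (Fin 4) ℝ))
    (hM₄ : M₄ = (Bmat ρ₁ ρ₂ k₁ k₂ lam) ^ 2 + μ₁ ^ 2 • (1 : Matrix (Fin 4) (Fin 4) ℝ)) :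
    0 < μ₁ ∧ μ₁ < μ₂ ∧
      ∀ z : ℝ, NormedSpace.exp (z • Bmat ρ₁ ρ₂ k₁ k₂ lam) =
        (1 / (lam * Δ)) •
          ((Real.sin (μ₁ * z) / μ₁) • M₁ - (Real.sin (μ₂ * z) / μ₂) • M₂
            + Real.cos (μ₁ * z) • M₃ - Real.cos (μ₂ * z) • M₄) := by
  have hlam0 : 0 < lam := lt_of_le_of_lt (Real.sqrt_nonneg _) hlam
  have hlamsq : k₁ / ρ₂ < lam ^ 2 := (Real.sqrt_lt' hlam0).1 hlam
  have hk1lt : k₁ < ρ₂ * lam ^ 2 := by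
    rw [div_lt_iff₀ hρ₂] at hlamsq; linarith
  have hΔpos : 0 < Δ := by
    rw [hΔ]; apply Real.sqrt_pos.2; positivity
  have hΔsq : Δ ^ 2 = (ρ₁ / k₁ - ρ₂ / k₂) ^ 2 * lam ^ 2 + 4 * ρ₁ / k₂ := by
    rw [hΔ, Real.sq_sqrt (by positivity)]
  have hlt' : lam * Δ < (ρ₁ / k₁ + ρ₂ / k₂) * lam ^ 2 := by
    have hsq : (lam * Δ) ^ 2 < ((ρ₁ / k₁ + ρ₂ / k₂) * lam ^ 2) ^ 2 := by
      have e : ((ρ₁ / k₁ + ρ₂ / k₂) * lam ^ 2) ^ 2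
          - lam ^ 2 * ((ρ₁ / k₁ - ρ₂ / k₂) ^ 2 * lam ^ 2 + 4 * ρ₁ / k₂)
          = 4 * lam ^ 2 * ρ₁ / (k₁ * k₂) * (ρ₂ * lam ^ 2 - k₁) := by
        field_simp
        ring
      have epos : 0 < 4 * lam ^ 2 * ρ₁ / (k₁ * k₂) * (ρ₂ * lam ^ 2 - k₁) :=
        mul_pos (by positivity) (sub_pos.2 hk1lt)
      have e2 : (lam * Δ) ^ 2 = lam ^ 2 * ((ρ₁ / k₁ - ρ₂ / k₂) ^ 2 * lam ^ 2 + 4 * ρ₁ / k₂) := by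
        rw [mul_pow, hΔsq]
      rw [e2]
      linarith [e ▸ epos]
    exact lt_of_pow_lt_pow_left₀ 2 (by positivity) hsq
  have harg1 : 0 < ((ρ₁ / k₁ + ρ₂ / k₂) * lam ^ 2 - lam * Δ) / 2 := by linarith
  have harg2 : 0 < ((ρ₁ / k₁ + ρ₂ / k₂) * lam ^ 2 + lam * Δ) / 2 := by positivity
  have hμ₁pos : 0 < μ₁ := by rw [hμ₁]; exact Real.sqrt_pos.2 harg1
  have hμ₂pos : 0 < μ₂ := by rw [hμ₂]; exact Real.sqrt_pos.2 harg2
  have hμ₁sq : μ₁ ^ 2 = ((ρ₁ / k₁ + ρ₂ / k₂) * lam ^ 2 - lam * Δ) / 2 := by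
    rw [hμ₁, Real.sq_sqrt harg1.le]
  have hμ₂sq : μ₂ ^ 2 = ((ρ₁ / k₁ + ρ₂ / k₂) * lam ^ 2 + lam * Δ) / 2 := by
    rw [hμ₂, Real.sq_sqrt harg2.le]
  have hμlt : μ₁ < μ₂ := by
    rw [hμ₁, hμ₂]
    apply Real.sqrt_lt_sqrt harg1.le
    have : 0 < lam * Δ := by positivity
    linarith
  refine ⟨hμ₁pos, hμlt, ?_⟩
  set B := Bmat ρ₁ ρ₂ k₁ k₂ lam with hBdef
  have hk₁' : k₁ ≠ 0 := ne_of_gt hk₁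
  have hk₂' : k₂ ≠ 0 := ne_of_gt hk₂
  have hlamD : lam * Δ ≠ 0 := by positivity
  have hsum : μ₁ ^ 2 + μ₂ ^ 2 = (ρ₁ / k₁ + ρ₂ / k₂) * lam ^ 2 := by
    rw [hμ₁sq, hμ₂sq]; ring
  have hprod : μ₁ ^ 2 * μ₂ ^ 2 = ρ₁ * lam ^ 2 * (ρ₂ * lam ^ 2 - k₁) / (k₁ * k₂) := by
    rw [hμ₁sq, hμ₂sq]
    have e : (((ρ₁/k₁+ρ₂/k₂)*lam^2 - lam*Δ)/2) * (((ρ₁/k₁+ρ₂/k₂)*lam^2 + lam*Δ)/2)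
        = (((ρ₁/k₁+ρ₂/k₂)*lam^2)^2 - lam^2*Δ^2)/4 := by ring
    rw [e, hΔsq]
    field_simp
    ring
  have hdiff : μ₂ ^ 2 - μ₁ ^ 2 = lam * Δ := by rw [hμ₁sq, hμ₂sq]; ring
  have key := Bmat_cayley ρ₁ ρ₂ k₁ k₂ lam hk₁' hk₂'
  rw [← hsum, ← hprod, ← hBdef] at key
  have hB4 : B ^ 4 = -((μ₁^2 + μ₂^2) • B ^ 2)
      - (μ₁^2 * μ₂^2) • (1 : Matrix (Fin 4) (Fin 4) ℝ) := by
    rw [add_assoc] at key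
    have h := eq_neg_of_add_eq_zero_left key
    rw [h]
    module
  have h1 : B * M₃ = M₁ := by rw [hM₁, hM₃]
  have h2 : B * M₄ = M₂ := by rw [hM₂, hM₄]
  have hexp : ∀ (c : ℝ), B * (B * (B ^ 2 + c • (1 : Matrix (Fin 4) (Fin 4) ℝ)))
      = B ^ 4 + c • B ^ 2 := by
    intro c
    have e : B * (B * (B ^ 2 + c • (1:Matrix (Fin 4) (Fin 4) ℝ)))
        = B * B * B ^ 2 + c • (B * B) := by
      rw [mul_add, mul_smul_comm, mul_one, mul_add, mul_smul_comm, ← mul_assoc]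
    rw [e, ← sq, ← pow_add]
  have h3 : B * M₁ = (-(μ₁^2)) • M₃ := by
    rw [hM₁, hM₃, hexp, hB4]
    module
  have h4 : B * M₂ = (-(μ₂^2)) • M₄ := by
    rw [hM₂, hM₄, hexp, hB4]
    module
  intro z
  letI : SeminormedRing (Matrix (Fin 4) (Fin 4) ℝ) := Matrix.linftyOpSemiNormedRing
  letI : NormedRing (Matrix (Fin 4) (Fin 4) ℝ) := Matrix.linftyOpNormedRing
  letI : NormedAlgebra ℝ (Matrix (Fin 4) (Fin 4) ℝ) := Matrix.linftyOpNormedAlgebra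
  set g : ℝ → Matrix (Fin 4) (Fin 4) ℝ := fun t =>
    (1 / (lam * Δ)) • ((Real.sin (μ₁ * t) / μ₁) • M₁ - (Real.sin (μ₂ * t) / μ₂) • M₂
      + Real.cos (μ₁ * t) • M₃ - Real.cos (μ₂ * t) • M₄) with hgdef
  have hBg : ∀ t, B * g t =
      (1 / (lam * Δ)) • (Real.cos (μ₁ * t) • M₁ - Real.cos (μ₂ * t) • M₂
        + (-(μ₁ * Real.sin (μ₁ * t))) • M₃ - (-(μ₂ * Real.sin (μ₂ * t))) • M₄) := by
    intro t
    show B * ((1 / (lam * Δ)) • ((Real.sin (μ₁ * t) / μ₁) • M₁ - (Real.sin (μ₂ * t) / μ₂) • M₂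
      + Real.cos (μ₁ * t) • M₃ - Real.cos (μ₂ * t) • M₄)) = _
    rw [mul_smul_comm]
    congr 1
    rw [mul_sub, mul_add, mul_sub, mul_smul_comm, mul_smul_comm, mul_smul_comm, mul_smul_comm,
      h1, h2, h3, h4, smul_smul, smul_smul]
    have e1 : Real.sin (μ₁ * t) / μ₁ * (-(μ₁ ^ 2)) = -(μ₁ * Real.sin (μ₁ * t)) := by
      field_simp
    have e2 : Real.sin (μ₂ * t) / μ₂ * (-(μ₂ ^ 2)) = -(μ₂ * Real.sin (μ₂ * t)) := by
      field_simp
    rw [e1, e2]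
    abel
  have hgderiv : ∀ t, HasDerivAt g (B * g t) t := by
    intro t
    rw [hBg]
    have d1 : HasDerivAt (fun u : ℝ => Real.sin (μ₁ * u) / μ₁) (Real.cos (μ₁ * t)) t := by
      have hs : HasDerivAt (fun u : ℝ => Real.sin (μ₁ * u)) (Real.cos (μ₁ * t) * μ₁) t := by
        have := (Real.hasDerivAt_sin (μ₁ * t)).comp t ((hasDerivAt_id t).const_mul μ₁)
        simpa [Function.comp_def] using this
      have := hs.div_const μ₁
      rw [mul_div_assoc, div_self (ne_of_gt hμ₁pos), mul_one] at this
      exact this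
    have d2 : HasDerivAt (fun u : ℝ => Real.sin (μ₂ * u) / μ₂) (Real.cos (μ₂ * t)) t := by
      have hs : HasDerivAt (fun u : ℝ => Real.sin (μ₂ * u)) (Real.cos (μ₂ * t) * μ₂) t := by
        have := (Real.hasDerivAt_sin (μ₂ * t)).comp t ((hasDerivAt_id t).const_mul μ₂)
        simpa [Function.comp_def] using this
      have := hs.div_const μ₂
      rw [mul_div_assoc, div_self (ne_of_gt hμ₂pos), mul_one] at this
      exact this
    have d3 : HasDerivAt (fun u : ℝ => Real.cos (μ₁ * u)) (-(μ₁ * Real.sin (μ₁ * t))) t := by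
      have := (Real.hasDerivAt_cos (μ₁ * t)).comp t ((hasDerivAt_id t).const_mul μ₁)
      simpa [mul_comm, Function.comp_def] using this
    have d4 : HasDerivAt (fun u : ℝ => Real.cos (μ₂ * u)) (-(μ₂ * Real.sin (μ₂ * t))) t := by
      have := (Real.hasDerivAt_cos (μ₂ * t)).comp t ((hasDerivAt_id t).const_mul μ₂)
      simpa [mul_comm, Function.comp_def] using this
    exact ((((d1.smul_const M₁).sub (d2.smul_const M₂)).add (d3.smul_const M₃)).sub
      (d4.smul_const M₄)).const_smul (1 / (lam * Δ))
  have hH : ∀ t, HasDerivAt (fun u : ℝ => NormedSpace.exp (u • (-B)) * g u) 0 t := by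
    intro t
    have hE : HasDerivAt (fun u : ℝ => NormedSpace.exp (u • (-B)))
        ((-B) * NormedSpace.exp (t • (-B))) t := hasDerivAt_exp_smul_const' (-B) t
    have hmul := hE.mul (hgderiv t)
    convert hmul using 1
    case e'_4 => rfl
    case e'_5 => rfl
    case e'_6 => rfl
    case e'_8 => rfl
    have hc : NormedSpace.exp (t • (-B)) * B = B * NormedSpace.exp (t • (-B)) :=
      ((((Commute.refl B).neg_left).smul_left t).exp_left).eq
    rw [← mul_assoc (NormedSpace.exp (t • (-B))) B (g t), hc, neg_mul, neg_mul,
      mul_assoc, neg_add_cancel]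
  have hconst := is_const_of_deriv_eq_zero (fun t => (hH t).differentiableAt)
    (fun t => (hH t).deriv) z 0
  have hg0 : g 0 = 1 := by
    show (1 / (lam * Δ)) • ((Real.sin (μ₁ * 0) / μ₁) • M₁ - (Real.sin (μ₂ * 0) / μ₂) • M₂
      + Real.cos (μ₁ * 0) • M₃ - Real.cos (μ₂ * 0) • M₄) = 1
    rw [mul_zero, mul_zero, Real.sin_zero, Real.cos_zero, zero_div, zero_div, zero_smul,
      zero_smul, one_smul, one_smul, sub_zero]
    have e : (0 : Matrix (Fin 4) (Fin 4) ℝ) + M₃ - M₄ = (lam * Δ) • (1 : Matrix (Fin 4) (Fin 4) ℝ) := by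
      rw [hM₃, hM₄, ← hdiff]
      module
    rw [e, smul_smul, one_div, inv_mul_cancel₀ hlamD, one_smul]
  have h0 : NormedSpace.exp ((0:ℝ) • (-B)) * g 0 = 1 := by
    rw [zero_smul, NormedSpace.exp_zero, hg0, one_mul]
  have hzg : NormedSpace.exp (z • (-B)) * g z = 1 := hconst.trans h0
  have hinv : NormedSpace.exp (z • B) * NormedSpace.exp (z • (-B)) = 1 := by
    rw [← Matrix.exp_add_of_commute _ _ ((((Commute.refl B).neg_right).smul_left z).smul_right z)]
    rw [smul_neg, add_neg_cancel, NormedSpace.exp_zero]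
  show NormedSpace.exp (z • B) = g z
  calc NormedSpace.exp (z • B)
      = NormedSpace.exp (z • B) * (NormedSpace.exp (z • (-B)) * g z) := by
        rw [hzg, mul_one]
    _ = (NormedSpace.exp (z • B) * NormedSpace.exp (z • (-B))) * g z := by
        rw [mul_assoc]
    _ = g z := by rw [hinv, one_mul]
end

section
/- Let ρ₁, ρ₂, k₁, k₂ be positive real constants with k₁/ρ₁ = k₂/ρ₂, and for each positive integer n let μ_{1,n} and μ_{2,n} be defined by the equal-speed formulas. Then, as n → ∞, μ_{1,n} − ( nπ·√(k₁/ρ₁) + (1/2)·√(k₁/ρ₂) + √(k₁ρ₁)/(8ρ₂πn) ) = O(n^{−3}) and μ_{2,n} − ( nπ·√(k₁/ρ₁) − (1/2)·√(k₁/ρ₂) + √(k₁ρ₁)/(8ρ₂πn) ) = O(n^{−3}). -/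
open Filter Asymptotics

/-- Equal-speed eigenfrequency, first branch. -/
noncomputable def mu1eq (ρ₁ ρ₂ k₁ : ℝ) (n : ℕ) : ℝ :=
  Real.sqrt (((n : ℝ) * Real.pi) ^ 2 * k₁ / ρ₁ + k₁ / (2 * ρ₂)
    + (1 / 2) * Real.sqrt (4 * k₁ ^ 2 * ((n : ℝ) * Real.pi) ^ 2 / (ρ₁ * ρ₂) + (k₁ / ρ₂) ^ 2))

/-- Equal-speed eigenfrequency, second branch. -/
noncomputable def mu2eq (ρ₁ ρ₂ k₁ : ℝ) (n : ℕ) : ℝ :=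
  Real.sqrt (((n : ℝ) * Real.pi) ^ 2 * k₁ / ρ₁ + k₁ / (2 * ρ₂)
    - (1 / 2) * Real.sqrt (4 * k₁ ^ 2 * ((n : ℝ) * Real.pi) ^ 2 / (ρ₁ * ρ₂) + (k₁ / ρ₂) ^ 2))

lemma sqrt_one_add_bounds (x : ℝ) (hx : 0 ≤ x) :
    |Real.sqrt (1 + x) - (1 + x / 2)| ≤ x ^ 2 / 8 := by
  have h1 : (0:ℝ) ≤ 1 + x := by linarith
  have ht2 : Real.sqrt (1 + x) ^ 2 = 1 + x := Real.sq_sqrt h1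
  have ht1 : 1 ≤ Real.sqrt (1 + x) := by
    have h := Real.sqrt_le_sqrt (show (1:ℝ) ≤ 1 + x by linarith)
    simpa using h
  have hprod : (1 + x/2 - Real.sqrt (1+x)) * (1 + x/2 + Real.sqrt (1+x)) = x^2/4 := by
    linear_combination (-1 : ℝ) * ht2
  have hS : 2 ≤ 1 + x/2 + Real.sqrt (1+x) := by linarith
  rw [abs_le]
  constructor
  · nlinarith [hprod, hS, sq_nonneg x]
  · nlinarith [sq_nonneg (Real.sqrt (1+x) - 1)]

lemma main_bound (ρ₁ ρ₂ k₁ : ℝ) (hρ₁ : 0 < ρ₁) (hρ₂ : 0 < ρ₂) (hk₁ : 0 < k₁)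
    (n : ℕ) (hn : 1 ≤ n) :
    |mu1eq ρ₁ ρ₂ k₁ n -
        ((n : ℝ) * Real.pi * Real.sqrt (k₁ / ρ₁) + (1 / 2) * Real.sqrt (k₁ / ρ₂)
          + Real.sqrt (k₁ * ρ₁) / (8 * ρ₂ * Real.pi * (n : ℝ)))| ≤
      (Real.sqrt (k₁ / ρ₂)) ^ 4 / (128 * Real.pi ^ 3 * (Real.sqrt (k₁ / ρ₁)) ^ 3)
        * (((n : ℝ) ^ 3)⁻¹) ∧
    |mu2eq ρ₁ ρ₂ k₁ n -
        ((n : ℝ) * Real.pi * Real.sqrt (k₁ / ρ₁) - (1 / 2) * Real.sqrt (k₁ / ρ₂)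
          + Real.sqrt (k₁ * ρ₁) / (8 * ρ₂ * Real.pi * (n : ℝ)))| ≤
      (Real.sqrt (k₁ / ρ₂)) ^ 4 / (128 * Real.pi ^ 3 * (Real.sqrt (k₁ / ρ₁)) ^ 3)
        * (((n : ℝ) ^ 3)⁻¹) := by
  have hπ := Real.pi_pos
  set s := Real.sqrt (k₁ / ρ₁) with hs
  set c := Real.sqrt (k₁ / ρ₂) with hc
  have hs0 : 0 < s := Real.sqrt_pos.2 (by positivity)
  have hc0 : 0 < c := Real.sqrt_pos.2 (by positivity)
  have hs2 : s ^ 2 = k₁ / ρ₁ := Real.sq_sqrt (by positivity)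
  have hc2 : c ^ 2 = k₁ / ρ₂ := Real.sq_sqrt (by positivity)
  have hN : (1:ℝ) ≤ (n:ℝ) := by exact_mod_cast hn
  have hN0 : (0:ℝ) < (n:ℝ) := by linarith
  set a := (n:ℝ) * Real.pi * s with ha
  have ha0 : 0 < a := by positivity
  set x := c ^ 2 / (4 * a ^ 2) with hx
  have hx0 : 0 < x := by positivity
  set t := Real.sqrt (1 + x) with htdef
  have ht2 : t ^ 2 = 1 + x := Real.sq_sqrt (by positivity)
  have ht0 : 0 < t := Real.sqrt_pos.2 (by positivity)
  have h4ax : 4 * a ^ 2 * x = c ^ 2 := by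
    rw [hx]; field_simp
  have ha2 : ((n:ℝ) * Real.pi) ^ 2 * k₁ / ρ₁ = a ^ 2 := by
    rw [ha]
    linear_combination -((n:ℝ) * Real.pi)^2 * hs2
  have hsk : Real.sqrt (k₁ * ρ₁) = k₁ / s := by
    rw [eq_div_iff (ne_of_gt hs0), mul_comm, hs, ← Real.sqrt_mul (by positivity)]
    rw [show k₁ / ρ₁ * (k₁ * ρ₁) = k₁ ^ 2 by field_simp]
    exact Real.sqrt_sq hk₁.le
  clear_value t x a c s
  -- inner sqrt
  have hinner : Real.sqrt (4 * k₁ ^ 2 * ((n : ℝ) * Real.pi) ^ 2 / (ρ₁ * ρ₂) + (k₁ / ρ₂) ^ 2)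
      = 2 * a * c * t := by
    rw [show 4 * k₁ ^ 2 * ((n : ℝ) * Real.pi) ^ 2 / (ρ₁ * ρ₂) + (k₁ / ρ₂) ^ 2
        = (2 * a * c * t) ^ 2 from ?_]
    · exact Real.sqrt_sq (by positivity)
    · have e1 : (2 * a * c * t) ^ 2 = 4 * a ^ 2 * c ^ 2 + c ^ 4 := by
        have h : (2 * a * c * t) ^ 2 = 4 * a ^ 2 * c ^ 2 * t ^ 2 := by ring
        rw [h, ht2]
        linear_combination c ^ 2 * h4ax
      rw [e1]
      have : 4 * k₁ ^ 2 * ((n : ℝ) * Real.pi) ^ 2 / (ρ₁ * ρ₂)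
          = 4 * (((n:ℝ) * Real.pi) ^ 2 * k₁ / ρ₁) * (k₁ / ρ₂) := by
        field_simp
      rw [this, ha2, ← hc2]
      ring
  have hmu1 : mu1eq ρ₁ ρ₂ k₁ n = a * t + c / 2 := by
    unfold mu1eq
    rw [hinner, show ((n:ℝ) * Real.pi) ^ 2 * k₁ / ρ₁ + k₁ / (2 * ρ₂)
        + (1 / 2) * (2 * a * c * t) = (a * t + c / 2) ^ 2 from ?_]
    · exact Real.sqrt_sq (by positivity)
    · have hk : k₁ / (2 * ρ₂) = c ^ 2 / 2 := by rw [hc2]; ring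
      rw [ha2, hk]
      linear_combination (-(a^2)) * ht2 - (1/4) * h4ax
  have hmu2 : mu2eq ρ₁ ρ₂ k₁ n = a * t - c / 2 := by
    have hge : c / 2 ≤ a * t := by
      nlinarith [ht2, h4ax, mul_pos ha0 ht0, sq_nonneg a, sq_nonneg (a * t + c / 2)]
    unfold mu2eq
    rw [hinner, show ((n:ℝ) * Real.pi) ^ 2 * k₁ / ρ₁ + k₁ / (2 * ρ₂)
        - (1 / 2) * (2 * a * c * t) = (a * t - c / 2) ^ 2 from ?_]
    · exact Real.sqrt_sq (by linarith)
    · have hk : k₁ / (2 * ρ₂) = c ^ 2 / 2 := by rw [hc2]; ring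
      rw [ha2, hk]
      linear_combination (-(a^2)) * ht2 - (1/4) * h4ax
  have htar : Real.sqrt (k₁ * ρ₁) / (8 * ρ₂ * Real.pi * (n:ℝ)) = a * x / 2 := by
    rw [hsk, hx, hc2, ha]
    field_simp
    ring
  have hdiff : ∀ y : ℝ, a * t + y - ((n:ℝ) * Real.pi * s + y
      + Real.sqrt (k₁ * ρ₁) / (8 * ρ₂ * Real.pi * (n:ℝ)))
      = a * (t - (1 + x / 2)) := by
    intro y
    rw [htar, ← ha]
    ring
  have hbound : |a * (t - (1 + x / 2))| ≤ c ^ 4 / (128 * Real.pi ^ 3 * s ^ 3)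
      * (((n : ℝ) ^ 3)⁻¹) := by
    rw [abs_mul, abs_of_pos ha0]
    have h1 : |t - (1 + x / 2)| ≤ x ^ 2 / 8 := by
      rw [htdef]; exact sqrt_one_add_bounds x hx0.le
    have h2 : a * |t - (1 + x / 2)| ≤ a * (x ^ 2 / 8) :=
      mul_le_mul_of_nonneg_left h1 ha0.le
    refine h2.trans (le_of_eq ?_)
    rw [hx, ha]
    field_simp
    ring
  constructor
  · rw [hmu1, htar,
      show a * t + c / 2 - (a + 1 / 2 * c + a * x / 2) = a * (t - (1 + x / 2)) by ring]
    exact hbound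
  · rw [hmu2, htar,
      show a * t - c / 2 - (a - 1 / 2 * c + a * x / 2) = a * (t - (1 + x / 2)) by ring]
    exact hbound

/-- Asymptotic expansion of the eigenfrequencies in the equal wave speed case. -/
theorem stmt_6 (ρ₁ ρ₂ k₁ k₂ : ℝ) (hρ₁ : 0 < ρ₁) (hρ₂ : 0 < ρ₂) (hk₁ : 0 < k₁) (hk₂ : 0 < k₂)
    (heq : k₁ / ρ₁ = k₂ / ρ₂) :
    (fun n : ℕ => mu1eq ρ₁ ρ₂ k₁ n -
        ((n : ℝ) * Real.pi * Real.sqrt (k₁ / ρ₁) + (1 / 2) * Real.sqrt (k₁ / ρ₂)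
          + Real.sqrt (k₁ * ρ₁) / (8 * ρ₂ * Real.pi * (n : ℝ))))
      =O[atTop] (fun n : ℕ => (((n : ℝ)) ^ 3)⁻¹) ∧
    (fun n : ℕ => mu2eq ρ₁ ρ₂ k₁ n -
        ((n : ℝ) * Real.pi * Real.sqrt (k₁ / ρ₁) - (1 / 2) * Real.sqrt (k₁ / ρ₂)
          + Real.sqrt (k₁ * ρ₁) / (8 * ρ₂ * Real.pi * (n : ℝ))))
      =O[atTop] (fun n : ℕ => (((n : ℝ)) ^ 3)⁻¹) := by
  set C := (Real.sqrt (k₁ / ρ₂)) ^ 4 / (128 * Real.pi ^ 3 * (Real.sqrt (k₁ / ρ₁)) ^ 3) with hC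
  constructor
  · rw [isBigO_iff]
    refine ⟨C, eventually_atTop.2 ⟨1, fun n hn => ?_⟩⟩
    have hN0 : (0:ℝ) < (n:ℝ) := by exact_mod_cast Nat.lt_of_lt_of_le Nat.zero_lt_one hn
    have := (main_bound ρ₁ ρ₂ k₁ hρ₁ hρ₂ hk₁ n hn).1
    rw [Real.norm_eq_abs, Real.norm_eq_abs, abs_of_pos (by positivity : (0:ℝ) < ((n:ℝ)^3)⁻¹)]
    exact this
  · rw [isBigO_iff]
    refine ⟨C, eventually_atTop.2 ⟨1, fun n hn => ?_⟩⟩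
    have hN0 : (0:ℝ) < (n:ℝ) := by exact_mod_cast Nat.lt_of_lt_of_le Nat.zero_lt_one hn
    have := (main_bound ρ₁ ρ₂ k₁ hρ₁ hρ₂ hk₁ n hn).2
    rw [Real.norm_eq_abs, Real.norm_eq_abs, abs_of_pos (by positivity : (0:ℝ) < ((n:ℝ)^3)⁻¹)]
    exact this
end

section
/- Let ρ₁, ρ₂, k₁, k₂ be positive real constants with k₁/ρ₁ = k₂/ρ₂, and for each positive integer n let μ_{1,n} and μ_{2,n} be defined by the equal-speed formulas. Then there exists γ > 0 such that for each j ∈ {1, 2} and all positive integers m ≠ n one has |μ_{j,m} − μ_{j,n}| ≥ 2γ. -/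
lemma mu_closed (ρ₁ ρ₂ k₁ : ℝ) (hρ₁ : 0 < ρ₁) (hρ₂ : 0 < ρ₂) (hk₁ : 0 < k₁) (n : ℕ) :
    mu1eq ρ₁ ρ₂ k₁ n
      = (Real.sqrt (4 * (k₁/ρ₁) * ((n:ℝ)*Real.pi)^2 + k₁/ρ₂) + Real.sqrt (k₁/ρ₂)) / 2 ∧
    mu2eq ρ₁ ρ₂ k₁ n
      = (Real.sqrt (4 * (k₁/ρ₁) * ((n:ℝ)*Real.pi)^2 + k₁/ρ₂) - Real.sqrt (k₁/ρ₂)) / 2 := by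
  set x : ℝ := ((n:ℝ)*Real.pi)^2 with hxdef
  have hx : 0 ≤ x := sq_nonneg _
  set s : ℝ := Real.sqrt (4 * (k₁/ρ₁) * x + k₁/ρ₂) with hsdef
  set t : ℝ := Real.sqrt (k₁/ρ₂) with htdef
  have hs0 : 0 ≤ s := Real.sqrt_nonneg _
  have ht0 : 0 ≤ t := Real.sqrt_nonneg _
  have hs : s ^ 2 = 4 * (k₁/ρ₁) * x + k₁/ρ₂ := Real.sq_sqrt (by positivity)
  have ht : t ^ 2 = k₁/ρ₂ := Real.sq_sqrt (by positivity)
  have hts : t ≤ s := Real.sqrt_le_sqrt (by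
    have : (0:ℝ) ≤ 4 * (k₁/ρ₁) * x := by positivity
    linarith)
  have hprod : Real.sqrt (4 * k₁ ^ 2 * x / (ρ₁ * ρ₂) + (k₁ / ρ₂) ^ 2) = s * t := by
    rw [show 4 * k₁ ^ 2 * x / (ρ₁ * ρ₂) + (k₁ / ρ₂) ^ 2
        = (4 * (k₁/ρ₁) * x + k₁/ρ₂) * (k₁/ρ₂) by field_simp,
      Real.sqrt_mul (by positivity)]
  clear_value x s t
  constructor
  · rw [mu1eq, ← hxdef, hprod,
      show x * k₁ / ρ₁ + k₁ / (2*ρ₂) + (1/2) * (s*t) = ((s+t)/2)^2 by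
        linear_combination (-1/4)*hs + (-1/4)*ht]
    exact Real.sqrt_sq (by positivity)
  · rw [mu2eq, ← hxdef, hprod,
      show x * k₁ / ρ₁ + k₁ / (2*ρ₂) - (1/2) * (s*t) = ((s-t)/2)^2 by
        linear_combination (-1/4)*hs + (-1/4)*ht]
    exact Real.sqrt_sq (by linarith)

set_option maxHeartbeats 1000000 in
lemma sqrt_gap (a b : ℝ) (ha : 0 < a) (hb : 0 < b) (m n : ℕ) (h : n < m) :
    4 * a * Real.pi ^ 2 / (2 * Real.sqrt a * Real.pi + 2 * Real.sqrt b)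
      ≤ Real.sqrt (4 * a * ((m:ℝ)*Real.pi)^2 + b)
        - Real.sqrt (4 * a * ((n:ℝ)*Real.pi)^2 + b) := by
  have hπ := Real.pi_pos
  have hsa : Real.sqrt a ^ 2 = a := Real.sq_sqrt ha.le
  have hsb : Real.sqrt b ^ 2 = b := Real.sq_sqrt hb.le
  have hsa0 : 0 < Real.sqrt a := Real.sqrt_pos.mpr ha
  have hsb0 : 0 < Real.sqrt b := Real.sqrt_pos.mpr hb
  set s : ℝ := Real.sqrt (4 * a * ((m:ℝ)*Real.pi)^2 + b) with hsdef
  set t : ℝ := Real.sqrt (4 * a * ((n:ℝ)*Real.pi)^2 + b) with htdef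
  have hs0 : 0 ≤ s := Real.sqrt_nonneg _
  have ht0 : 0 ≤ t := Real.sqrt_nonneg _
  have hs : s ^ 2 = 4 * a * ((m:ℝ)*Real.pi)^2 + b := Real.sq_sqrt (by positivity)
  have ht : t ^ 2 = 4 * a * ((n:ℝ)*Real.pi)^2 + b := Real.sq_sqrt (by positivity)
  have hm1 : (1:ℝ) ≤ (m:ℝ) := by exact_mod_cast Nat.one_le_iff_ne_zero.mpr (by omega)
  have hn0 : (0:ℝ) ≤ (n:ℝ) := Nat.cast_nonneg n
  have hmn : (n:ℝ) + 1 ≤ (m:ℝ) := by exact_mod_cast h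
  -- upper bounds for s and t
  have hsb' : s ≤ 2 * Real.sqrt a * Real.pi * (m:ℝ) + Real.sqrt b := by
    rw [hsdef]
    rw [show 2 * Real.sqrt a * Real.pi * (m:ℝ) + Real.sqrt b
        = Real.sqrt ((2 * Real.sqrt a * Real.pi * (m:ℝ) + Real.sqrt b)^2) by
          exact (Real.sqrt_sq (by positivity)).symm]
    apply Real.sqrt_le_sqrt
    nlinarith [mul_nonneg (mul_nonneg hsa0.le hπ.le) (mul_nonneg (by positivity : (0:ℝ) ≤ (m:ℝ)) hsb0.le)]
  have htb' : t ≤ 2 * Real.sqrt a * Real.pi * (n:ℝ) + Real.sqrt b := by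
    rw [htdef]
    rw [show 2 * Real.sqrt a * Real.pi * (n:ℝ) + Real.sqrt b
        = Real.sqrt ((2 * Real.sqrt a * Real.pi * (n:ℝ) + Real.sqrt b)^2) by
          exact (Real.sqrt_sq (by positivity)).symm]
    apply Real.sqrt_le_sqrt
    nlinarith [mul_nonneg (mul_nonneg hsa0.le hπ.le) (mul_nonneg hn0 hsb0.le)]
  have hden : 0 < 2 * Real.sqrt a * Real.pi + 2 * Real.sqrt b := by positivity
  have hst : 0 < s + t := by
    have : 0 < t := Real.sqrt_pos.mpr (by positivity)
    linarith
  have hmono : 4 * a * ((n:ℝ)*Real.pi)^2 ≤ 4 * a * ((m:ℝ)*Real.pi)^2 := by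
    have h1 : (0:ℝ) ≤ (n:ℝ)*Real.pi := by positivity
    have h2 : (n:ℝ)*Real.pi ≤ (m:ℝ)*Real.pi := by nlinarith
    have h3 := pow_le_pow_left₀ h1 h2 2
    nlinarith
  have hst_pos : 0 ≤ s - t := by
    rw [hsdef, htdef]
    have := Real.sqrt_le_sqrt (show 4 * a * ((n:ℝ)*Real.pi)^2 + b ≤ 4 * a * ((m:ℝ)*Real.pi)^2 + b by linarith)
    linarith
  clear_value s t
  rw [div_le_iff₀ hden]
  have hdiff : (s - t) * (s + t) = 4 * a * Real.pi^2 * ((m:ℝ)^2 - (n:ℝ)^2) := by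
    linear_combination hs - ht
  have e1 : 0 ≤ 2 * Real.sqrt b * ((m:ℝ) + (n:ℝ) - 1) :=
    mul_nonneg (by positivity) (by linarith)
  have hsum : s + t ≤ (2 * Real.sqrt a * Real.pi + 2 * Real.sqrt b) * ((m:ℝ) + (n:ℝ)) := by
    linarith [hsb', htb', e1]
  have hM0 : (0:ℝ) < (m:ℝ) + (n:ℝ) := by linarith
  have h3 : 4 * a * Real.pi^2 * ((m:ℝ) + (n:ℝ)) ≤ (s - t) * (s + t) := by
    rw [hdiff]
    nlinarith [mul_nonneg (mul_nonneg (by positivity : (0:ℝ) ≤ 4*a*Real.pi^2)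
      (by linarith : (0:ℝ) ≤ (m:ℝ)+(n:ℝ))) (by linarith : (0:ℝ) ≤ (m:ℝ)-(n:ℝ)-1)]
  have h4 : (s - t) * (s + t)
      ≤ (s - t) * ((2 * Real.sqrt a * Real.pi + 2 * Real.sqrt b) * ((m:ℝ) + (n:ℝ))) :=
    mul_le_mul_of_nonneg_left hsum hst_pos
  have h5 : 4 * a * Real.pi ^ 2 * ((m:ℝ) + (n:ℝ))
      ≤ (s - t) * (2 * Real.sqrt a * Real.pi + 2 * Real.sqrt b) * ((m:ℝ) + (n:ℝ)) := by
    calc 4 * a * Real.pi ^ 2 * ((m:ℝ) + (n:ℝ)) ≤ (s - t) * (s + t) := h3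
    _ ≤ (s - t) * ((2 * Real.sqrt a * Real.pi + 2 * Real.sqrt b) * ((m:ℝ) + (n:ℝ))) := h4
    _ = (s - t) * (2 * Real.sqrt a * Real.pi + 2 * Real.sqrt b) * ((m:ℝ) + (n:ℝ)) := by ring
  exact le_of_mul_le_mul_right h5 hM0

/-- Uniform gap within each branch of eigenfrequencies in the equal wave speed case. -/
theorem stmt_9 (ρ₁ ρ₂ k₁ k₂ : ℝ) (hρ₁ : 0 < ρ₁) (hρ₂ : 0 < ρ₂) (hk₁ : 0 < k₁) (hk₂ : 0 < k₂)
    (heq : k₁ / ρ₁ = k₂ / ρ₂) :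
    ∃ γ : ℝ, 0 < γ ∧ ∀ m n : ℕ, 0 < m → 0 < n → m ≠ n →
      2 * γ ≤ |mu1eq ρ₁ ρ₂ k₁ m - mu1eq ρ₁ ρ₂ k₁ n| ∧
      2 * γ ≤ |mu2eq ρ₁ ρ₂ k₁ m - mu2eq ρ₁ ρ₂ k₁ n| := by
  set a : ℝ := k₁ / ρ₁ with hadef
  set b : ℝ := k₁ / ρ₂ with hbdef
  have ha : 0 < a := by positivity
  have hb : 0 < b := by positivity
  have hπ := Real.pi_pos
  set δ : ℝ := 4 * a * Real.pi ^ 2 / (2 * Real.sqrt a * Real.pi + 2 * Real.sqrt b) with hδdef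
  have hδ : 0 < δ := by
    apply div_pos (by positivity)
    have := Real.sqrt_pos.mpr ha
    have := Real.sqrt_pos.mpr hb
    positivity
  refine ⟨δ / 8, by positivity, ?_⟩
  intro m n hm hn hmn
  have key : ∀ p q : ℕ, q < p →
      2 * (δ/8) ≤ |mu1eq ρ₁ ρ₂ k₁ p - mu1eq ρ₁ ρ₂ k₁ q| ∧
      2 * (δ/8) ≤ |mu2eq ρ₁ ρ₂ k₁ p - mu2eq ρ₁ ρ₂ k₁ q| := by
    intro p q hpq
    obtain ⟨h1p, h2p⟩ := mu_closed ρ₁ ρ₂ k₁ hρ₁ hρ₂ hk₁ p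
    obtain ⟨h1q, h2q⟩ := mu_closed ρ₁ ρ₂ k₁ hρ₁ hρ₂ hk₁ q
    have hg := sqrt_gap a b ha hb p q hpq
    rw [← hδdef] at hg
    constructor
    · rw [h1p, h1q]
      rw [abs_of_nonneg (by linarith)]
      linarith
    · rw [h2p, h2q]
      rw [abs_of_nonneg (by linarith)]
      linarith
  rcases lt_or_gt_of_ne hmn with hlt | hgt
  · obtain ⟨c1, c2⟩ := key n m hlt
    rw [abs_sub_comm] at c1 c2
    exact ⟨c1, c2⟩
  · exact key m n hgt
end

section
/- Let ρ₁, ρ₂, k₁, k₂ be positive real constants with k₁/ρ₁ = k₂/ρ₂, satisfying condition (A₁), and such that √(k₁/k₂) ≠ kπ for every natural number k. For each positive integer n let μ_{1,n} and μ_{2,n} be defined by the equal-speed formulas. Then there exists γ̃ > 0 such that |μ_{1,m} − μ_{2,n}| ≥ γ̃ for all positive integers m and n. -/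
namespace Stmt10Aux

noncomputable def P (ρ₁ k₁ : ℝ) : ℝ := Real.pi * Real.sqrt (k₁ / ρ₁)
noncomputable def D (ρ₂ k₁ : ℝ) : ℝ := Real.sqrt (k₁ / ρ₂) / 2
noncomputable def Q (ρ₁ ρ₂ k₁ : ℝ) (n : ℕ) : ℝ :=
  Real.sqrt ((P ρ₁ k₁ * n) ^ 2 + (D ρ₂ k₁) ^ 2)

variable {ρ₁ ρ₂ k₁ : ℝ}

lemma P_pos (hρ₁ : 0 < ρ₁) (hk₁ : 0 < k₁) : 0 < P ρ₁ k₁ := by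
  have := Real.pi_pos
  have : 0 < Real.sqrt (k₁ / ρ₁) := Real.sqrt_pos.mpr (div_pos hk₁ hρ₁)
  unfold P; positivity

lemma D_pos (hρ₂ : 0 < ρ₂) (hk₁ : 0 < k₁) : 0 < D ρ₂ k₁ := by
  have : 0 < Real.sqrt (k₁ / ρ₂) := Real.sqrt_pos.mpr (div_pos hk₁ hρ₂)
  unfold D; positivity

lemma P_sq (hρ₁ : 0 < ρ₁) (hk₁ : 0 < k₁) :
    (P ρ₁ k₁) ^ 2 = Real.pi ^ 2 * (k₁ / ρ₁) := by
  unfold P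
  rw [mul_pow, Real.sq_sqrt (div_pos hk₁ hρ₁).le]

lemma D_sq (hρ₂ : 0 < ρ₂) (hk₁ : 0 < k₁) :
    (D ρ₂ k₁) ^ 2 = k₁ / ρ₂ / 4 := by
  unfold D
  rw [div_pow, Real.sq_sqrt (div_pos hk₁ hρ₂).le]
  norm_num

lemma Q_sq (n : ℕ) : (Q ρ₁ ρ₂ k₁ n) ^ 2 = (P ρ₁ k₁ * n) ^ 2 + (D ρ₂ k₁) ^ 2 := by
  unfold Q; rw [Real.sq_sqrt (by positivity)]

lemma Q_nonneg (n : ℕ) : 0 ≤ Q ρ₁ ρ₂ k₁ n := Real.sqrt_nonneg _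

lemma Q_lb (n : ℕ) : P ρ₁ k₁ * n ≤ Q ρ₁ ρ₂ k₁ n := by
  rcases le_or_gt (P ρ₁ k₁ * n) 0 with h | h
  · exact h.trans (Q_nonneg n)
  · nlinarith [Q_sq (ρ₁ := ρ₁) (ρ₂ := ρ₂) (k₁ := k₁) n,
      Q_nonneg (ρ₁ := ρ₁) (ρ₂ := ρ₂) (k₁ := k₁) n]

/-- multiplied-form upper bound for Q -/
lemma Q_ub (n : ℕ) :
    2 * (P ρ₁ k₁ * n) * Q ρ₁ ρ₂ k₁ n ≤ 2 * (P ρ₁ k₁ * n) ^ 2 + (D ρ₂ k₁) ^ 2 := by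
  nlinarith [sq_nonneg (P ρ₁ k₁ * n - Q ρ₁ ρ₂ k₁ n),
    Q_sq (ρ₁ := ρ₁) (ρ₂ := ρ₂) (k₁ := k₁) n]

/-- the inner sqrt of the mu formulas equals `4 D Q n` -/
lemma inner_sqrt (hρ₁ : 0 < ρ₁) (hρ₂ : 0 < ρ₂) (hk₁ : 0 < k₁) (n : ℕ) :
    Real.sqrt (4 * k₁ ^ 2 * ((n : ℝ) * Real.pi) ^ 2 / (ρ₁ * ρ₂) + (k₁ / ρ₂) ^ 2)
      = 4 * D ρ₂ k₁ * Q ρ₁ ρ₂ k₁ n := by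
  have h : 4 * k₁ ^ 2 * ((n : ℝ) * Real.pi) ^ 2 / (ρ₁ * ρ₂) + (k₁ / ρ₂) ^ 2
      = (4 * D ρ₂ k₁ * Q ρ₁ ρ₂ k₁ n) ^ 2 := by
    have hq := Q_sq (ρ₁ := ρ₁) (ρ₂ := ρ₂) (k₁ := k₁) n
    have hp := P_sq hρ₁ hk₁
    have hd := D_sq hρ₂ hk₁
    have h1 : (4 * D ρ₂ k₁ * Q ρ₁ ρ₂ k₁ n) ^ 2
        = 16 * (D ρ₂ k₁)^2 * ((P ρ₁ k₁)^2 * (n:ℝ)^2 + (D ρ₂ k₁)^2) := by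
      rw [mul_pow, mul_pow, hq, mul_pow]; ring
    rw [h1, hp, hd]
    field_simp
    ring
  rw [h]
  exact Real.sqrt_sq (by
    have h1 := D_pos hρ₂ hk₁
    have h2 := Q_nonneg (ρ₁ := ρ₁) (ρ₂ := ρ₂) (k₁ := k₁) n
    positivity)

lemma mu1_eq (hρ₁ : 0 < ρ₁) (hρ₂ : 0 < ρ₂) (hk₁ : 0 < k₁) (m : ℕ) :
    mu1eq ρ₁ ρ₂ k₁ m = Real.sqrt ((P ρ₁ k₁ * m) ^ 2 + 2 * (D ρ₂ k₁) ^ 2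
      + 2 * D ρ₂ k₁ * Q ρ₁ ρ₂ k₁ m) := by
  unfold mu1eq
  rw [inner_sqrt hρ₁ hρ₂ hk₁ m]
  congr 1
  have hp := P_sq hρ₁ hk₁
  have hd := D_sq hρ₂ hk₁
  have h1 : (P ρ₁ k₁ * m) ^ 2 = (P ρ₁ k₁)^2 * (m:ℝ)^2 := by ring
  rw [h1, hp, hd]
  field_simp
  ring

lemma mu2_eq (hρ₁ : 0 < ρ₁) (hρ₂ : 0 < ρ₂) (hk₁ : 0 < k₁) (n : ℕ) :
    mu2eq ρ₁ ρ₂ k₁ n = Real.sqrt ((P ρ₁ k₁ * n) ^ 2 + 2 * (D ρ₂ k₁) ^ 2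
      - 2 * D ρ₂ k₁ * Q ρ₁ ρ₂ k₁ n) := by
  unfold mu2eq
  rw [inner_sqrt hρ₁ hρ₂ hk₁ n]
  congr 1
  have hp := P_sq hρ₁ hk₁
  have hd := D_sq hρ₂ hk₁
  have h1 : (P ρ₁ k₁ * n) ^ 2 = (P ρ₁ k₁)^2 * (n:ℝ)^2 := by ring
  rw [h1, hp, hd]
  field_simp
  ring

/-- error constant -/
noncomputable def F (ρ₁ ρ₂ k₁ : ℝ) : ℝ :=
  (D ρ₂ k₁)^2 / P ρ₁ k₁ + (D ρ₂ k₁)^3 / (P ρ₁ k₁)^2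

lemma F_pos (hρ₁ : 0 < ρ₁) (hρ₂ : 0 < ρ₂) (hk₁ : 0 < k₁) : 0 < F ρ₁ ρ₂ k₁ := by
  have hp := P_pos hρ₁ hk₁
  have hd := D_pos hρ₂ hk₁
  unfold F; positivity

lemma pF (hρ₁ : 0 < ρ₁) (hρ₂ : 0 < ρ₂) (hk₁ : 0 < k₁) :
    P ρ₁ k₁ * F ρ₁ ρ₂ k₁ = (D ρ₂ k₁)^2 + (D ρ₂ k₁)^3 / P ρ₁ k₁ := by
  have hp := P_pos hρ₁ hk₁
  unfold F; field_simp

lemma mu1_lb (hρ₁ : 0 < ρ₁) (hρ₂ : 0 < ρ₂) (hk₁ : 0 < k₁) (m : ℕ) :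
    P ρ₁ k₁ * m + D ρ₂ k₁ ≤ mu1eq ρ₁ ρ₂ k₁ m := by
  have hp := P_pos hρ₁ hk₁
  have hd := D_pos hρ₂ hk₁
  have hql := Q_lb (ρ₁ := ρ₁) (ρ₂ := ρ₂) (k₁ := k₁) m
  rw [mu1_eq hρ₁ hρ₂ hk₁ m]
  have h0 : 0 ≤ P ρ₁ k₁ * m + D ρ₂ k₁ := by positivity
  calc P ρ₁ k₁ * m + D ρ₂ k₁ = Real.sqrt ((P ρ₁ k₁ * m + D ρ₂ k₁)^2) :=
        (Real.sqrt_sq h0).symm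
    _ ≤ _ := Real.sqrt_le_sqrt (by nlinarith)

lemma mu1_ub (hρ₁ : 0 < ρ₁) (hρ₂ : 0 < ρ₂) (hk₁ : 0 < k₁) {m : ℕ} (hm : 1 ≤ m) :
    mu1eq ρ₁ ρ₂ k₁ m ≤ P ρ₁ k₁ * m + D ρ₂ k₁ + F ρ₁ ρ₂ k₁ / m := by
  have hp := P_pos hρ₁ hk₁
  have hd := D_pos hρ₂ hk₁
  have hm1 : (1:ℝ) ≤ (m:ℝ) := by exact_mod_cast hm
  have hm0 : (0:ℝ) < (m:ℝ) := by linarith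
  have hql := Q_lb (ρ₁ := ρ₁) (ρ₂ := ρ₂) (k₁ := k₁) m
  have hqu := Q_ub (ρ₁ := ρ₁) (ρ₂ := ρ₂) (k₁ := k₁) m
  set p := P ρ₁ k₁
  set d := D ρ₂ k₁
  set q := Q ρ₁ ρ₂ k₁ m with hqdef
  set t := F ρ₁ ρ₂ k₁ / m with htdef
  have hv : 0 < p * m := by positivity
  have ht0 : 0 ≤ t := by
    have := F_pos hρ₁ hρ₂ hk₁; rw [htdef]; positivity
  have ht : t * (p * m) = p * F ρ₁ ρ₂ k₁ := by
    rw [htdef]; field_simp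
  have hpF := pF hρ₁ hρ₂ hk₁
  have hd3 : 0 ≤ d^3 / p := by positivity
  -- step: 2*d*(q - p*m) ≤ d^3/p
  have hstep : 2 * d * (q - p * m) ≤ d^3 / p := by
    rw [le_div_iff₀ hp]
    have h1 : (q - p * m) * (2 * (p * m)) ≤ d^2 := by nlinarith
    have h2 : 2 * d * (q - p * m) * p ≤ 2 * d * (q - p*m) * (p * m) := by
      apply mul_le_mul_of_nonneg_left _ (by nlinarith)
      nlinarith
    nlinarith
  rw [mu1_eq hρ₁ hρ₂ hk₁ m]
  have h0 : 0 ≤ p * m + d + t := by positivity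
  calc Real.sqrt ((p * m)^2 + 2*d^2 + 2*d*q)
      ≤ Real.sqrt ((p * m + d + t)^2) := by
        apply Real.sqrt_le_sqrt
        have hexp : (p*m + d + t)^2
            = (p*m)^2 + d^2 + t^2 + 2*d*(p*m) + 2*(t*(p*m)) + 2*d*t := by ring
        rw [hexp, ht, hpF]
        nlinarith [sq_nonneg t, mul_nonneg hd.le ht0]
    _ = p * m + d + t := Real.sqrt_sq h0

lemma mu2_inner_nonneg (hρ₁ : 0 < ρ₁) (hρ₂ : 0 < ρ₂) (hk₁ : 0 < k₁) (n : ℕ) :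
    0 ≤ (P ρ₁ k₁ * n) ^ 2 + 2 * (D ρ₂ k₁) ^ 2 - 2 * D ρ₂ k₁ * Q ρ₁ ρ₂ k₁ n := by
  have hq := Q_sq (ρ₁ := ρ₁) (ρ₂ := ρ₂) (k₁ := k₁) n
  nlinarith [sq_nonneg (D ρ₂ k₁ - Q ρ₁ ρ₂ k₁ n)]

lemma mu2_lb (hρ₁ : 0 < ρ₁) (hρ₂ : 0 < ρ₂) (hk₁ : 0 < k₁) (n : ℕ) :
    P ρ₁ k₁ * n - D ρ₂ k₁ ≤ mu2eq ρ₁ ρ₂ k₁ n := by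
  have hp := P_pos hρ₁ hk₁
  have hd := D_pos hρ₂ hk₁
  rcases le_or_gt (P ρ₁ k₁ * n) (D ρ₂ k₁) with h | h
  · have : P ρ₁ k₁ * n - D ρ₂ k₁ ≤ 0 := by linarith
    exact this.trans (Real.sqrt_nonneg _)
  · have hql := Q_lb (ρ₁ := ρ₁) (ρ₂ := ρ₂) (k₁ := k₁) n
    have hqu := Q_ub (ρ₁ := ρ₁) (ρ₂ := ρ₂) (k₁ := k₁) n
    rw [mu2_eq hρ₁ hρ₂ hk₁ n]
    have h0 : 0 ≤ P ρ₁ k₁ * n - D ρ₂ k₁ := by linarith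
    calc P ρ₁ k₁ * n - D ρ₂ k₁ = Real.sqrt ((P ρ₁ k₁ * n - D ρ₂ k₁)^2) :=
          (Real.sqrt_sq h0).symm
      _ ≤ _ := Real.sqrt_le_sqrt (by nlinarith)

lemma mu2_ub (hρ₁ : 0 < ρ₁) (hρ₂ : 0 < ρ₂) (hk₁ : 0 < k₁) {n : ℕ} (hn : 1 ≤ n) :
    mu2eq ρ₁ ρ₂ k₁ n ≤ P ρ₁ k₁ * n - D ρ₂ k₁ + F ρ₁ ρ₂ k₁ / n := by
  have hp := P_pos hρ₁ hk₁
  have hd := D_pos hρ₂ hk₁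
  have hn1 : (1:ℝ) ≤ (n:ℝ) := by exact_mod_cast hn
  have hn0 : (0:ℝ) < (n:ℝ) := by linarith
  have hql := Q_lb (ρ₁ := ρ₁) (ρ₂ := ρ₂) (k₁ := k₁) n
  set p := P ρ₁ k₁
  set d := D ρ₂ k₁
  set q := Q ρ₁ ρ₂ k₁ n with hqdef
  set t := F ρ₁ ρ₂ k₁ / n with htdef
  have hv : 0 < p * n := by positivity
  have ht0 : 0 ≤ t := by
    have := F_pos hρ₁ hρ₂ hk₁; rw [htdef]; positivity
  have ht : t * (p * n) = p * F ρ₁ ρ₂ k₁ := by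
    rw [htdef]; field_simp
  have hpF := pF hρ₁ hρ₂ hk₁
  have hd3 : 0 ≤ d^3 / p := by positivity
  have h0 : 0 ≤ p * n - d + t := by
    by_contra hcon
    push_neg at hcon
    have h1 : p * n + t < d := by linarith
    have h2 : (p * n) * (p * n + t) < d * d := by
      apply mul_lt_mul' _ h1 (by positivity) hd
      nlinarith
    nlinarith
  rw [mu2_eq hρ₁ hρ₂ hk₁ n]
  calc Real.sqrt ((p * n)^2 + 2*d^2 - 2*d*q)
      ≤ Real.sqrt ((p * n - d + t)^2) := by
        apply Real.sqrt_le_sqrt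
        have hexp : (p*n - d + t)^2
            = (p*n)^2 + d^2 + t^2 - 2*d*(p*n) + 2*(t*(p*n)) - 2*d*t := by ring
        rw [hexp, ht, hpF]
        nlinarith [sq_nonneg (t - d), mul_nonneg hd.le ht0]
    _ = p * n - d + t := Real.sqrt_sq h0

lemma mu_ne (hρ₁ : 0 < ρ₁) (hρ₂ : 0 < ρ₂) (hk₁ : 0 < k₁) {k₂ : ℝ} (hk₂ : 0 < k₂)
    (heq : k₁ / ρ₁ = k₂ / ρ₂) (hA1 : condA1 ρ₁ ρ₂ k₁ k₂)
    {m n : ℕ} (hm : 0 < m) (hn : 0 < n) :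
    mu1eq ρ₁ ρ₂ k₁ m ≠ mu2eq ρ₁ ρ₂ k₁ n := by
  intro h
  have hp := P_pos hρ₁ hk₁
  have hd := D_pos hρ₂ hk₁
  set p := P ρ₁ k₁ with hpdef
  set d := D ρ₂ k₁ with hddef
  set a := Q ρ₁ ρ₂ k₁ m with hadef
  set b := Q ρ₁ ρ₂ k₁ n with hbdef
  have ha2 : a^2 = (p*(m:ℝ))^2 + d^2 := Q_sq m
  have hb2 : b^2 = (p*(n:ℝ))^2 + d^2 := Q_sq n
  have ha0 : 0 ≤ a := Q_nonneg m
  have hb0 : 0 ≤ b := Q_nonneg n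
  have hapos : 0 < a := by nlinarith
  have hbpos : 0 < b := by nlinarith
  rw [mu1_eq hρ₁ hρ₂ hk₁ m, mu2_eq hρ₁ hρ₂ hk₁ n] at h
  have hinner1 : (0:ℝ) ≤ (p*(m:ℝ))^2 + 2*d^2 + 2*d*a := by positivity
  have hinner2 := mu2_inner_nonneg hρ₁ hρ₂ hk₁ n
  have heq2 : (p*(m:ℝ))^2 + 2*d^2 + 2*d*a = (p*(n:ℝ))^2 + 2*d^2 - 2*d*b := by
    have hc := congrArg (· ^ 2) h
    simpa [Real.sq_sqrt (show (0:ℝ) ≤ (P ρ₁ k₁ * m)^2 + 2*(D ρ₂ k₁)^2 + 2*D ρ₂ k₁ * Q ρ₁ ρ₂ k₁ m from hinner1), Real.sq_sqrt hinner2] using hc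
  have hsum : 2*d*(a+b) = (p*(n:ℝ))^2 - (p*(m:ℝ))^2 := by linarith
  have hdiff : b - a = 2*d := by
    have h1 : (b - a) * (a + b) = (2*d) * (a + b) := by
      linear_combination hb2 - ha2 - hsum
    exact mul_right_cancel₀ (by positivity) h1
  have h4 : 4*d*a = (p*(n:ℝ))^2 - (p*(m:ℝ))^2 - 4*d^2 := by
    linear_combination hsum - 2*d*hdiff
  have hkey' : ((p*(n:ℝ))^2 - (p*(m:ℝ))^2)^2
      = 8*d^2*((p*(n:ℝ))^2 + (p*(m:ℝ))^2) := by
    linear_combination 16*d^2*ha2 - (4*d*a + ((p*(n:ℝ))^2 - (p*(m:ℝ))^2 - 4*d^2))*h4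
  have hkeyp : p^2*((n:ℝ)^2-(m:ℝ)^2)^2 = 8*d^2*((n:ℝ)^2+(m:ℝ)^2) := by
    have h5 : p^2*(p^2*((n:ℝ)^2-(m:ℝ)^2)^2) = p^2*(8*d^2*((n:ℝ)^2+(m:ℝ)^2)) := by
      linear_combination hkey'
    exact mul_left_cancel₀ (by positivity) h5
  have hkeyπ : Real.pi^2*(k₁/ρ₁)*((n:ℝ)^2-(m:ℝ)^2)^2
      = 2*(k₁/ρ₂)*((n:ℝ)^2+(m:ℝ)^2) := by
    have hp2 : p^2 = Real.pi^2*(k₁/ρ₁) := P_sq hρ₁ hk₁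
    have hd2 : d^2 = k₁/ρ₂/4 := D_sq hρ₂ hk₁
    rw [hp2, hd2] at hkeyp
    linear_combination hkeyp
  -- contradiction with condition (A₁)
  have hne : ((n:ℤ), (m:ℤ)) ≠ ((0:ℤ), (0:ℤ)) := by
    simp only [ne_eq, Prod.mk.injEq, not_and]
    intro hn0
    exact absurd hn0 (by exact_mod_cast hn.ne')
  have hA1' := hA1 (n:ℤ) (m:ℤ) hne
  apply hA1'
  push_cast
  have e1 : k₂ / ρ₂ = k₁ / ρ₁ := heq.symm
  have hnm : (0:ℝ) < (n:ℝ)^2 + (m:ℝ)^2 := by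
    have : (0:ℝ) < (n:ℝ) := by exact_mod_cast hn
    positivity
  have hden : ((k₁/ρ₁ + k₂/ρ₂) * ((n:ℝ)^2 + (m:ℝ)^2)) ≠ 0 := by positivity
  have hnum : (k₂*(n:ℝ)^2/ρ₂ - k₁*(m:ℝ)^2/ρ₁) * (k₁*(n:ℝ)^2/ρ₁ - k₂*(m:ℝ)^2/ρ₂) * Real.pi^2
      = (k₁/ρ₂) * ((k₁/ρ₁ + k₂/ρ₂) * ((n:ℝ)^2 + (m:ℝ)^2)) := by
    linear_combination (Real.pi^2*((k₁/ρ₁)*((n:ℝ)^4+(m:ℝ)^4)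
      - (n:ℝ)^2*(m:ℝ)^2*(k₂/ρ₂ + k₁/ρ₁)) - (k₁/ρ₂)*((n:ℝ)^2+(m:ℝ)^2)) * e1
      + (k₁/ρ₁) * hkeyπ
  rw [hnum, mul_div_assoc, div_self hden, mul_one]
lemma int_gap {lam : ℝ} (h : ∀ j : ℤ, (j:ℝ) ≠ lam) :
    0 < min (Int.fract lam) (1 - Int.fract lam) ∧
      ∀ j : ℤ, min (Int.fract lam) (1 - Int.fract lam) ≤ |(j:ℝ) + lam| := by
  have hf0 : 0 < Int.fract lam := by
    rcases lt_or_eq_of_le (Int.fract_nonneg lam) with h1 | h1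
    · exact h1
    · exfalso
      have h2 : lam = ((⌊lam⌋ : ℤ) : ℝ) := by
        have h3 : lam - ⌊lam⌋ = Int.fract lam := rfl
        rw [← h1] at h3
        linarith
      exact h ⌊lam⌋ h2.symm
  have hf1 : Int.fract lam < 1 := Int.fract_lt_one lam
  refine ⟨lt_min hf0 (by linarith), ?_⟩
  intro j
  set δ := min (Int.fract lam) (1 - Int.fract lam) with hδdef
  have hδf : δ ≤ Int.fract lam := min_le_left _ _
  have hδf' : δ ≤ 1 - Int.fract lam := min_le_right _ _
  have hx : (j:ℝ) + lam = ((j + ⌊lam⌋ : ℤ):ℝ) + Int.fract lam := by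
    have h3 : lam - ⌊lam⌋ = Int.fract lam := rfl
    push_cast
    linarith
  rcases le_or_gt 0 (j + ⌊lam⌋) with hr | hr
  · have hr' : (0:ℝ) ≤ ((j + ⌊lam⌋ : ℤ):ℝ) := by exact_mod_cast hr
    have : δ ≤ (j:ℝ) + lam := by rw [hx]; linarith
    exact this.trans (le_abs_self _)
  · have hr2 : j + ⌊lam⌋ ≤ -1 := by omega
    have hr' : ((j + ⌊lam⌋ : ℤ):ℝ) ≤ -1 := by exact_mod_cast hr2
    have : δ ≤ -((j:ℝ) + lam) := by rw [hx]; linarith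
    exact this.trans (neg_le_abs _)
lemma lam_pi (hρ₁ : 0 < ρ₁) (hρ₂ : 0 < ρ₂) (hk₁ : 0 < k₁) {k₂ : ℝ} (hk₂ : 0 < k₂)
    (heq : k₁ / ρ₁ = k₂ / ρ₂) :
    (2 * D ρ₂ k₁ / P ρ₁ k₁) * Real.pi = Real.sqrt (k₁ / k₂) := by
  have hπ := Real.pi_pos
  have h1 : 0 < Real.sqrt (k₁/ρ₁) := Real.sqrt_pos.mpr (div_pos hk₁ hρ₁)
  have heqp : k₁ * ρ₂ = k₂ * ρ₁ := by
    field_simp at heq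
    linear_combination heq
  have harg : k₁ / k₂ = (k₁/ρ₂) / (k₁/ρ₁) := by
    field_simp
    linear_combination heqp
  rw [harg, Real.sqrt_div (div_pos hk₁ hρ₂).le]
  unfold P D
  field_simp
end Stmt10Aux

set_option maxHeartbeats 1000000 in
/-- Uniform gap between the two branches of eigenfrequencies in the equal wave speed case
when `√(k₁/k₂)` is not an integer multiple of `π`. -/
theorem stmt_10 (ρ₁ ρ₂ k₁ k₂ : ℝ) (hρ₁ : 0 < ρ₁) (hρ₂ : 0 < ρ₂) (hk₁ : 0 < k₁) (hk₂ : 0 < k₂)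
    (heq : k₁ / ρ₁ = k₂ / ρ₂) (hA1 : condA1 ρ₁ ρ₂ k₁ k₂)
    (hirr : ∀ k : ℕ, Real.sqrt (k₁ / k₂) ≠ (k : ℝ) * Real.pi) :
    ∃ γ : ℝ, 0 < γ ∧ ∀ m n : ℕ, 0 < m → 0 < n →
      γ ≤ |mu1eq ρ₁ ρ₂ k₁ m - mu2eq ρ₁ ρ₂ k₁ n| := by
  classical
  have hπ := Real.pi_pos
  have hp := Stmt10Aux.P_pos hρ₁ hk₁
  have hd := Stmt10Aux.D_pos hρ₂ hk₁
  have hF := Stmt10Aux.F_pos hρ₁ hρ₂ hk₁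
  set p := Stmt10Aux.P ρ₁ k₁ with hpdef
  set d := Stmt10Aux.D ρ₂ k₁ with hddef
  set Fc := Stmt10Aux.F ρ₁ ρ₂ k₁ with hFdef
  set lam := 2 * d / p with hlamdef
  have hlam0 : 0 < lam := by positivity
  have hlam_ne : ∀ j : ℤ, (j:ℝ) ≠ lam := by
    intro j hj
    rcases lt_or_ge j 0 with hj0 | hj0
    · have : (j:ℝ) < 0 := by exact_mod_cast hj0
      linarith [hj ▸ hlam0]
    · lift j to ℕ using hj0 with k
      have hlp : lam * Real.pi = Real.sqrt (k₁/k₂) :=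
        Stmt10Aux.lam_pi hρ₁ hρ₂ hk₁ hk₂ heq
      apply hirr k
      rw [← hlp, ← hj]
      push_cast
      ring
  obtain ⟨hδ, hgap⟩ := Stmt10Aux.int_gap hlam_ne
  set δ := min (Int.fract lam) (1 - Int.fract lam) with hδdef
  -- threshold N
  obtain ⟨N, hN1, hNr⟩ : ∃ N : ℕ, 1 ≤ N ∧ 4*Fc/(p*δ) ≤ (N:ℝ) := by
    refine ⟨⌈4*Fc/(p*δ)⌉₊ + 1, by omega, ?_⟩
    calc 4*Fc/(p*δ) ≤ (⌈4*Fc/(p*δ)⌉₊ : ℝ) := Nat.le_ceil _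
      _ ≤ ((⌈4*Fc/(p*δ)⌉₊ + 1 : ℕ):ℝ) := by push_cast; linarith
  -- main estimate for m,n ≥ N
  have hmain : ∀ m n : ℕ, N ≤ m → N ≤ n →
      p*δ/2 ≤ |mu1eq ρ₁ ρ₂ k₁ m - mu2eq ρ₁ ρ₂ k₁ n| := by
    intro m n hm hn
    have hm1 : 1 ≤ m := hN1.trans hm
    have hn1 : 1 ≤ n := hN1.trans hn
    have hmr : (N:ℝ) ≤ (m:ℝ) := by exact_mod_cast hm
    have hnr : (N:ℝ) ≤ (n:ℝ) := by exact_mod_cast hn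
    have hNr0 : (0:ℝ) < N := by
      have : (1:ℝ) ≤ (N:ℝ) := by exact_mod_cast hN1
      linarith
    have hm0 : (0:ℝ) < (m:ℝ) := by linarith
    have hn0 : (0:ℝ) < (n:ℝ) := by linarith
    -- F/n and F/m are ≤ pδ/4
    have hFn : Fc/(n:ℝ) ≤ p*δ/4 := by
      rw [div_le_iff₀ hn0]
      have hc : 4*Fc/(p*δ)*(p*δ) = 4*Fc := by field_simp
      nlinarith [mul_nonneg (sub_nonneg.mpr (hNr.trans hnr)) (mul_pos hp hδ).le]
    have hFm : Fc/(m:ℝ) ≤ p*δ/4 := by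
      rw [div_le_iff₀ hm0]
      have hc : 4*Fc/(p*δ)*(p*δ) = 4*Fc := by field_simp
      nlinarith [mul_nonneg (sub_nonneg.mpr (hNr.trans hmr)) (mul_pos hp hδ).le]
    set X := p*((m:ℝ) - (n:ℝ)) + 2*d with hXdef
    set j : ℤ := (m:ℤ) - (n:ℤ) with hjdef
    have hXj : X = p*((j:ℝ) + lam) := by
      rw [hXdef, hlamdef, hjdef]
      push_cast
      field_simp
    have hXabs : p*δ ≤ |X| := by
      rw [hXj, abs_mul, abs_of_pos hp]
      exact mul_le_mul_of_nonneg_left (hgap j) hp.le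
    have hlow : X - Fc/(n:ℝ) ≤ mu1eq ρ₁ ρ₂ k₁ m - mu2eq ρ₁ ρ₂ k₁ n := by
      have h1 := Stmt10Aux.mu1_lb hρ₁ hρ₂ hk₁ m
      have h2 := Stmt10Aux.mu2_ub hρ₁ hρ₂ hk₁ hn1
      rw [← hpdef, ← hddef] at h1
      rw [← hpdef, ← hddef, ← hFdef] at h2
      rw [hXdef]
      linarith
    have hhigh : mu1eq ρ₁ ρ₂ k₁ m - mu2eq ρ₁ ρ₂ k₁ n ≤ X + Fc/(m:ℝ) := by
      have h1 := Stmt10Aux.mu1_ub hρ₁ hρ₂ hk₁ hm1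
      have h2 := Stmt10Aux.mu2_lb hρ₁ hρ₂ hk₁ n
      rw [← hpdef, ← hddef, ← hFdef] at h1
      rw [← hpdef, ← hddef] at h2
      rw [hXdef]
      linarith
    rcases le_or_gt 0 X with hX0 | hX0
    · have hXge : p*δ ≤ X := by rwa [abs_of_nonneg hX0] at hXabs
      have : p*δ/2 ≤ mu1eq ρ₁ ρ₂ k₁ m - mu2eq ρ₁ ρ₂ k₁ n := by
        linarith [mul_pos hp hδ]
      exact this.trans (le_abs_self _)
    · have hXle : X ≤ -(p*δ) := by
        rw [abs_of_neg hX0] at hXabs; linarith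
      have : p*δ/2 ≤ -(mu1eq ρ₁ ρ₂ k₁ m - mu2eq ρ₁ ρ₂ k₁ n) := by
        linarith [mul_pos hp hδ]
      exact this.trans (neg_le_abs _)
  -- second threshold M
  set C := Fc + 1 + 3*d with hCdef
  obtain ⟨M, hNM, hM2, hpM⟩ :
      ∃ M : ℕ, N ≤ M ∧ 2 ≤ M ∧ p*(N:ℝ) + C ≤ p*(M:ℝ) := by
    refine ⟨N + ⌈C/p⌉₊ + 1, by omega, by omega, ?_⟩
    have h1 : C/p ≤ (⌈C/p⌉₊ : ℝ) := Nat.le_ceil _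
    have h2 : (N:ℝ) + C/p ≤ ((N + ⌈C/p⌉₊ + 1 : ℕ):ℝ) := by push_cast; linarith
    have h3 : p * (C/p) = C := by field_simp
    nlinarith
  -- far-off-diagonal cases
  have hlargeA : ∀ m n : ℕ, 1 ≤ n → n < N → M ≤ m →
      1 ≤ mu1eq ρ₁ ρ₂ k₁ m - mu2eq ρ₁ ρ₂ k₁ n := by
    intro m n hn1 hnN hMm
    have h1 := Stmt10Aux.mu1_lb hρ₁ hρ₂ hk₁ m
    have h2 := Stmt10Aux.mu2_ub hρ₁ hρ₂ hk₁ hn1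
    rw [← hpdef, ← hddef] at h1
    rw [← hpdef, ← hddef, ← hFdef] at h2
    have hn1r : (1:ℝ) ≤ (n:ℝ) := by exact_mod_cast hn1
    have hnNr : (n:ℝ) ≤ (N:ℝ) := by exact_mod_cast hnN.le
    have hMmr : (M:ℝ) ≤ (m:ℝ) := by exact_mod_cast hMm
    have hFn : Fc/(n:ℝ) ≤ Fc := by
      rw [div_le_iff₀ (by linarith)]; nlinarith
    have hmono : p*(M:ℝ) ≤ p*(m:ℝ) := by nlinarith
    have hmono2 : p*(n:ℝ) ≤ p*(N:ℝ) := by nlinarith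
    rw [hCdef] at hpM
    linarith
  have hlargeB : ∀ m n : ℕ, 1 ≤ m → m < N → M ≤ n →
      1 ≤ mu2eq ρ₁ ρ₂ k₁ n - mu1eq ρ₁ ρ₂ k₁ m := by
    intro m n hm1 hmN hMn
    have h1 := Stmt10Aux.mu1_ub hρ₁ hρ₂ hk₁ hm1
    have h2 := Stmt10Aux.mu2_lb hρ₁ hρ₂ hk₁ n
    rw [← hpdef, ← hddef, ← hFdef] at h1
    rw [← hpdef, ← hddef] at h2
    have hm1r : (1:ℝ) ≤ (m:ℝ) := by exact_mod_cast hm1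
    have hmNr : (m:ℝ) ≤ (N:ℝ) := by exact_mod_cast hmN.le
    have hMnr : (M:ℝ) ≤ (n:ℝ) := by exact_mod_cast hMn
    have hFm : Fc/(m:ℝ) ≤ Fc := by
      rw [div_le_iff₀ (by linarith)]; nlinarith
    have hmono : p*(M:ℝ) ≤ p*(n:ℝ) := by nlinarith
    have hmono2 : p*(m:ℝ) ≤ p*(N:ℝ) := by nlinarith
    rw [hCdef] at hpM
    linarith
  -- finite part
  obtain ⟨⟨a, b⟩, habmem, hmin⟩ := Finset.exists_min_image
    (Finset.Ico 1 M ×ˢ Finset.Ico 1 M)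
    (fun q : ℕ × ℕ => |mu1eq ρ₁ ρ₂ k₁ q.1 - mu2eq ρ₁ ρ₂ k₁ q.2|)
    ⟨(1, 1), Finset.mem_product.mpr
      ⟨Finset.mem_Ico.mpr ⟨le_refl 1, by omega⟩, Finset.mem_Ico.mpr ⟨le_refl 1, by omega⟩⟩⟩
  set γ₀ := |mu1eq ρ₁ ρ₂ k₁ a - mu2eq ρ₁ ρ₂ k₁ b| with hγ₀def
  have hγ₀pos : 0 < γ₀ := by
    rw [Finset.mem_product, Finset.mem_Ico, Finset.mem_Ico] at habmem
    exact abs_pos.mpr (sub_ne_zero.mpr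
      (Stmt10Aux.mu_ne hρ₁ hρ₂ hk₁ hk₂ heq hA1 habmem.1.1 habmem.2.1))
  have hγ₀le : ∀ m n : ℕ, 1 ≤ m → m < M → 1 ≤ n → n < M →
      γ₀ ≤ |mu1eq ρ₁ ρ₂ k₁ m - mu2eq ρ₁ ρ₂ k₁ n| := by
    intro m n h1 h2 h3 h4
    exact hmin (m, n) (Finset.mem_product.mpr
      ⟨Finset.mem_Ico.mpr ⟨h1, h2⟩, Finset.mem_Ico.mpr ⟨h3, h4⟩⟩)
  -- conclusion
  refine ⟨min (min (p*δ/2) 1) γ₀, ?_, ?_⟩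
  · have := mul_pos hp hδ
    apply lt_min (lt_min (by linarith) one_pos) hγ₀pos
  intro m n hm hn
  have habs1 : ∀ x : ℝ, (1:ℝ) ≤ x → min (min (p*δ/2) 1) γ₀ ≤ x := by
    intro x hx
    calc min (min (p*δ/2) 1) γ₀ ≤ min (p*δ/2) 1 := min_le_left _ _
      _ ≤ 1 := min_le_right _ _
      _ ≤ x := hx
  rcases lt_or_ge m N with hmN | hmN
  · rcases lt_or_ge n M with hnM | hnM
    · exact le_trans (min_le_right _ _) (hγ₀le m n hm (lt_of_lt_of_le hmN hNM) hn hnM)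
    · have h1 := hlargeB m n hm hmN hnM
      apply habs1
      calc (1:ℝ) ≤ mu2eq ρ₁ ρ₂ k₁ n - mu1eq ρ₁ ρ₂ k₁ m := h1
        _ = -(mu1eq ρ₁ ρ₂ k₁ m - mu2eq ρ₁ ρ₂ k₁ n) := by ring
        _ ≤ |mu1eq ρ₁ ρ₂ k₁ m - mu2eq ρ₁ ρ₂ k₁ n| := neg_le_abs _
  · rcases lt_or_ge n N with hnN | hnN
    · rcases lt_or_ge m M with hmM | hmM
      · exact le_trans (min_le_right _ _) (hγ₀le m n hm hmM hn (lt_of_lt_of_le hnN hNM))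
      · have h1 := hlargeA m n hn hnN hmM
        apply habs1
        exact h1.trans (le_abs_self _)
    · exact le_trans (le_trans (min_le_left _ _) (min_le_left _ _)) (hmain m n hmN hnN)
end

section
/- Let ρ₁, ρ₂, k₁, k₂ be positive real constants with k₁/ρ₁ = k₂/ρ₂, satisfying condition (A₁), and such that √(k₁/k₂) = k₀π for some positive integer k₀. For each positive integer n let μ_{1,n} and μ_{2,n} be defined by the equal-speed formulas. Then there exist constants c₂ > c₁ > 0 and N₀ ∈ ℕ such that for all integers m, n ≥ N₀ one has |μ_{1,m} − μ_{2,n}| ≥ c₁/m² and |μ_{1,m} − μ_{2,n}| ≥ c₁/n²; moreover, for every N ∈ ℕ there exist integers m, n ≥ N with |μ_{1,m} − μ_{2,n}| ≤ c₂/m² and |μ_{1,m} − μ_{2,n}| ≤ c₂/n². -/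
lemma mu_eval (ρ₁ ρ₂ k₁ k₂ : ℝ) (hρ₁ : 0 < ρ₁) (hρ₂ : 0 < ρ₂) (hk₁ : 0 < k₁) (hk₂ : 0 < k₂)
    (heq : k₁ / ρ₁ = k₂ / ρ₂) (K : ℝ) (hK : 0 < K)
    (hres : Real.sqrt (k₁ / k₂) = K * Real.pi) (n : ℕ) :
    mu1eq ρ₁ ρ₂ k₁ n
      = Real.sqrt (k₁ / ρ₁) * Real.pi / 2 * (Real.sqrt (4 * (n : ℝ) ^ 2 + K ^ 2) + K) ∧
    mu2eq ρ₁ ρ₂ k₁ n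
      = Real.sqrt (k₁ / ρ₁) * Real.pi / 2 * (Real.sqrt (4 * (n : ℝ) ^ 2 + K ^ 2) - K) := by
  have hπ := Real.pi_pos
  have h1 : k₁ / k₂ = (K * Real.pi) ^ 2 := by
    rw [← hres, Real.sq_sqrt (div_pos hk₁ hk₂).le]
  have h2 : k₁ * ρ₂ = k₂ * ρ₁ := (div_eq_div_iff hρ₁.ne' hρ₂.ne').mp heq
  have h3 : k₁ = (K * Real.pi) ^ 2 * k₂ := (div_eq_iff hk₂.ne').mp h1
  set a := k₁ / ρ₁ with ha_def
  have ha : 0 < a := div_pos hk₁ hρ₁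
  set F : ℝ := Real.sqrt (4 * (n : ℝ) ^ 2 + K ^ 2) with hF_def
  have hF2 : F ^ 2 = 4 * (n : ℝ) ^ 2 + K ^ 2 := Real.sq_sqrt (by positivity)
  have hFK : K ≤ F := by
    have h := Real.sqrt_le_sqrt (show K ^ 2 ≤ 4 * (n : ℝ) ^ 2 + K ^ 2 by nlinarith [sq_nonneg ((n:ℝ))])
    rwa [Real.sqrt_sq hK.le] at h
  have hF0 : 0 ≤ F := Real.sqrt_nonneg _
  have hsa : Real.sqrt a ^ 2 = a := Real.sq_sqrt ha.le
  have hsa0 : 0 < Real.sqrt a := Real.sqrt_pos.mpr ha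
  have hb : k₁ / ρ₂ = a * (K ^ 2 * Real.pi ^ 2) := by
    rw [ha_def]
    rw [div_mul_eq_mul_div, eq_div_iff hρ₁.ne', div_mul_eq_mul_div, div_eq_iff hρ₂.ne']
    linear_combination ρ₁ * h3 - (K * Real.pi) ^ 2 * h2
  have hinner : Real.sqrt (4 * k₁ ^ 2 * ((n : ℝ) * Real.pi) ^ 2 / (ρ₁ * ρ₂) + (k₁ / ρ₂) ^ 2)
      = a * K * Real.pi ^ 2 * F := by
    rw [show 4 * k₁ ^ 2 * ((n : ℝ) * Real.pi) ^ 2 / (ρ₁ * ρ₂) + (k₁ / ρ₂) ^ 2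
        = (a * K * Real.pi ^ 2 * F) ^ 2 from ?_]
    · exact Real.sqrt_sq (by positivity)
    · have e1 : 4 * k₁ ^ 2 * ((n : ℝ) * Real.pi) ^ 2 / (ρ₁ * ρ₂)
          = 4 * a * (k₁ / ρ₂) * ((n : ℝ) * Real.pi) ^ 2 := by
        rw [ha_def]
        field_simp
      rw [e1, hb]
      linear_combination (-(a * K * Real.pi ^ 2) ^ 2) * hF2
  have e1 : ((n : ℝ) * Real.pi) ^ 2 * k₁ / ρ₁ = a * ((n : ℝ) * Real.pi) ^ 2 := by
    rw [ha_def]; ring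
  have e2 : k₁ / (2 * ρ₂) = a * (K ^ 2 * Real.pi ^ 2) / 2 := by
    rw [show k₁ / (2 * ρ₂) = (k₁ / ρ₂) / 2 by rw [div_div, mul_comm], hb]
  constructor
  · rw [mu1eq, hinner, e1, e2,
      show a * ((n : ℝ) * Real.pi) ^ 2 + a * (K ^ 2 * Real.pi ^ 2) / 2
          + 1 / 2 * (a * K * Real.pi ^ 2 * F)
        = (Real.sqrt a * Real.pi / 2 * (F + K)) ^ 2 from by
        linear_combination (-(Real.pi / 2 * (F + K)) ^ 2) * hsa - (a * Real.pi ^ 2 / 4) * hF2]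
    exact Real.sqrt_sq (by positivity)
  · rw [mu2eq, hinner, e1, e2,
      show a * ((n : ℝ) * Real.pi) ^ 2 + a * (K ^ 2 * Real.pi ^ 2) / 2
          - 1 / 2 * (a * K * Real.pi ^ 2 * F)
        = (Real.sqrt a * Real.pi / 2 * (F - K)) ^ 2 from by
        linear_combination (-(Real.pi / 2 * (F - K)) ^ 2) * hsa - (a * Real.pi ^ 2 / 4) * hF2]
    exact Real.sqrt_sq (mul_nonneg (by positivity) (by linarith))

noncomputable def Feq (K : ℝ) (n : ℕ) : ℝ := Real.sqrt (4 * (n : ℝ) ^ 2 + K ^ 2)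

section Faux
variable {K : ℝ} (hK : 0 < K)

lemma Feq_sq (n : ℕ) : Feq K n ^ 2 = 4 * (n : ℝ) ^ 2 + K ^ 2 := by
  have : (0:ℝ) ≤ 4 * (n : ℝ) ^ 2 + K ^ 2 := by positivity
  exact Real.sq_sqrt this

lemma Feq_ge (n : ℕ) : 2 * (n : ℝ) ≤ Feq K n := by
  have h := Real.sqrt_le_sqrt (show (2 * (n:ℝ)) ^ 2 ≤ 4 * (n : ℝ) ^ 2 + K ^ 2 by nlinarith [sq_nonneg K])
  rwa [Real.sqrt_sq (by positivity)] at h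

lemma Feq_mono {m n : ℕ} (h : m ≤ n) : Feq K m ≤ Feq K n := by
  refine Real.sqrt_le_sqrt ?_
  have h' : (m:ℝ) ≤ n := by exact_mod_cast h
  have h0 : (0:ℝ) ≤ m := Nat.cast_nonneg m
  nlinarith

include hK in
lemma Feq_pos (n : ℕ) : 0 < Feq K n := by
  have h := Real.sqrt_le_sqrt (show K ^ 2 ≤ 4 * (n : ℝ) ^ 2 + K ^ 2 by nlinarith [sq_nonneg ((n:ℝ))])
  rw [Real.sqrt_sq hK.le] at h
  exact lt_of_lt_of_le hK h

include hK in
lemma Feq_eps (n : ℕ) : Feq K n - 2 * (n : ℝ) = K ^ 2 / (Feq K n + 2 * n) := by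
  have hd : 0 < Feq K n + 2 * (n:ℝ) := by
    have := Feq_pos hK n
    have h0 : (0:ℝ) ≤ n := Nat.cast_nonneg n
    linarith
  rw [eq_div_iff hd.ne']
  linear_combination Feq_sq (K := K) n

lemma Feq_le {n : ℕ} (hn : 1 ≤ n) : Feq K n ≤ 2 * n + K ^ 2 / (4 * n) := by
  have hn0 : (0:ℝ) < n := by exact_mod_cast hn
  have hq : 4 * (n:ℝ) * (K ^ 2 / (4 * n)) = K ^ 2 := by field_simp
  have h := Real.sqrt_le_sqrt (show 4 * (n : ℝ) ^ 2 + K ^ 2 ≤ (2 * n + K ^ 2 / (4 * n)) ^ 2 by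
    nlinarith [sq_nonneg (K ^ 2 / (4 * (n:ℝ)))])
  rwa [Real.sqrt_sq (by positivity)] at h

end Faux

lemma feq_diag (k₀ : ℕ) (hk₀ : 0 < k₀) (m : ℕ) (hm : k₀ ^ 2 ≤ m) :
    2 * (k₀:ℝ) ^ 3 / (25 * ((m:ℝ) * ((m + k₀ : ℕ):ℝ))) ≤
      Feq (k₀:ℝ) m - Feq (k₀:ℝ) (m + k₀) + 2 * (k₀:ℝ) ∧
    Feq (k₀:ℝ) m - Feq (k₀:ℝ) (m + k₀) + 2 * (k₀:ℝ) ≤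
      5 * (k₀:ℝ) ^ 3 / (16 * ((m:ℝ) * ((m + k₀ : ℕ):ℝ))) := by
  set K : ℝ := (k₀ : ℝ) with hK_def
  have hK1 : (1:ℝ) ≤ K := by rw [hK_def]; exact_mod_cast hk₀
  have hK : (0:ℝ) < K := by linarith
  have hm1 : 1 ≤ m := le_trans (Nat.one_le_iff_ne_zero.mpr (pow_ne_zero 2 hk₀.ne')) hm
  have hmR : K ^ 2 ≤ (m:ℝ) := by rw [hK_def]; exact_mod_cast hm
  have hm0 : (1:ℝ) ≤ m := by exact_mod_cast hm1
  set n : ℕ := m + k₀ with hn_def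
  have hnR : (n:ℝ) = (m:ℝ) + K := by rw [hn_def]; push_cast; ring
  have hn1 : 1 ≤ n := le_trans hm1 (Nat.le_add_right _ _)
  have hn0 : (1:ℝ) ≤ n := by exact_mod_cast hn1
  have hKm : K ≤ (m:ℝ) := by nlinarith
  have hmn : (m:ℝ) ≤ n := by rw [hnR]; linarith
  have hn2m : (n:ℝ) ≤ 2 * m := by rw [hnR]; linarith
  set P : ℝ := Feq K m + 2 * m with hP_def
  set Q : ℝ := Feq K n + 2 * n with hQ_def
  have hP0 : 0 < P := by have := Feq_pos hK m; rw [hP_def]; positivity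
  have hQ0 : 0 < Q := by have := Feq_pos hK n; rw [hQ_def]; positivity
  have hPl : 4 * (m:ℝ) ≤ P := by have := Feq_ge (K := K) m; rw [hP_def]; linarith
  have hQl : 4 * (n:ℝ) ≤ Q := by have := Feq_ge (K := K) n; rw [hQ_def]; linarith
  have hPu : P ≤ 5 * (m:ℝ) := by
    have h := Feq_le (K := K) hm1
    have h2 : K ^ 2 / (4 * (m:ℝ)) ≤ m := by
      rw [div_le_iff₀ (by positivity)]; nlinarith
    rw [hP_def]; linarith
  have hQu : Q ≤ 5 * (n:ℝ) := by
    have h := Feq_le (K := K) hn1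
    have h2 : K ^ 2 / (4 * (n:ℝ)) ≤ n := by
      rw [div_le_iff₀ (by positivity)]; nlinarith
    rw [hQ_def]; linarith
  have hQP1 : 2 * K ≤ Q - P := by
    have := Feq_mono (K := K) (Nat.le_add_right m k₀)
    rw [hP_def, hQ_def, hnR]; linarith
  have hQP2 : Q - P ≤ 5 * K := by
    have h := Feq_le (K := K) hn1
    have h2 : K ^ 2 / (4 * (n:ℝ)) ≤ K := by
      rw [div_le_iff₀ (by positivity)]; nlinarith
    have := Feq_ge (K := K) m
    rw [hP_def, hQ_def, hnR]; linarith
  have hGeq : Feq K m - Feq K n + 2 * K = K ^ 2 * (Q - P) / (P * Q) := by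
    have hu := Feq_eps hK m
    have hv := Feq_eps hK n
    rw [← hP_def] at hu
    rw [← hQ_def] at hv
    have h : Feq K m - Feq K n + 2 * K = K ^ 2 / P - K ^ 2 / Q := by
      rw [← hu, ← hv, hnR]; ring
    rw [h, div_sub_div _ _ hP0.ne' hQ0.ne',
      show K ^ 2 * Q - P * K ^ 2 = K ^ 2 * (Q - P) by ring]
  have hmn0 : (0:ℝ) ≤ (m:ℝ) * n := by positivity
  have hPQu : P * Q ≤ 25 * ((m:ℝ) * n) := by
    have h := mul_le_mul hPu hQu hQ0.le (by positivity : (0:ℝ) ≤ 5 * (m:ℝ))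
    linarith only [h]
  have hPQl : 16 * ((m:ℝ) * n) ≤ P * Q := by
    have h := mul_le_mul hPl hQl (by positivity : (0:ℝ) ≤ 4 * (n:ℝ)) hP0.le
    linarith only [h]
  constructor
  · rw [hGeq, div_le_div_iff₀ (by positivity) (by positivity)]
    have e1 : 2 * K ^ 3 * (P * Q) ≤ 2 * K ^ 3 * (25 * ((m:ℝ) * n)) :=
      mul_le_mul_of_nonneg_left hPQu (by positivity)
    have e2 : 0 ≤ K ^ 2 * ((m:ℝ) * n) * ((Q - P) - 2 * K) :=
      mul_nonneg (mul_nonneg (sq_nonneg K) hmn0) (by linarith)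
    linarith only [e1, e2]
  · rw [hGeq, div_le_div_iff₀ (by positivity) (by positivity)]
    have e1 : 0 ≤ K ^ 2 * ((m:ℝ) * n) * (5 * K - (Q - P)) :=
      mul_nonneg (mul_nonneg (sq_nonneg K) hmn0) (by linarith)
    have e2 : 5 * K ^ 3 * (16 * ((m:ℝ) * n)) ≤ 5 * K ^ 3 * (P * Q) :=
      mul_le_mul_of_nonneg_left hPQl (by positivity)
    linarith only [e1, e2]

lemma feq_eps_bounds (k₀ : ℕ) (hk₀ : 0 < k₀) (m : ℕ) (hm : k₀ ^ 2 ≤ m) :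
    0 ≤ Feq (k₀:ℝ) m - 2 * (m:ℝ) ∧ Feq (k₀:ℝ) m - 2 * (m:ℝ) ≤ 1 / 4 := by
  set K : ℝ := (k₀ : ℝ) with hK_def
  have hK1 : (1:ℝ) ≤ K := by rw [hK_def]; exact_mod_cast hk₀
  have hK : (0:ℝ) < K := by linarith
  have hm1 : 1 ≤ m := le_trans (Nat.one_le_iff_ne_zero.mpr (pow_ne_zero 2 hk₀.ne')) hm
  have hmR : K ^ 2 ≤ (m:ℝ) := by rw [hK_def]; exact_mod_cast hm
  have hm0 : (1:ℝ) ≤ m := by exact_mod_cast hm1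
  refine ⟨by linarith [Feq_ge (K := K) m], ?_⟩
  have h := Feq_le (K := K) hm1
  have h2 : K ^ 2 / (4 * (m:ℝ)) ≤ 1 / 4 := by
    rw [div_le_div_iff₀ (by positivity) (by norm_num)]; nlinarith
  linarith

lemma feq_off (k₀ : ℕ) (hk₀ : 0 < k₀) (m n : ℕ) (hm : k₀ ^ 2 ≤ m) (hn : k₀ ^ 2 ≤ n)
    (hne : n ≠ m + k₀) : 1 ≤ |Feq (k₀:ℝ) m - Feq (k₀:ℝ) n + 2 * (k₀:ℝ)| := by
  set K : ℝ := (k₀ : ℝ) with hK_def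
  obtain ⟨hlm, hum⟩ := feq_eps_bounds k₀ hk₀ m hm
  obtain ⟨hln, hun⟩ := feq_eps_bounds k₀ hk₀ n hn
  rcases lt_or_gt_of_ne hne with h | h
  · have h1 : (n:ℝ) + 1 ≤ (m:ℝ) + K := by
      have h' : n + 1 ≤ m + k₀ := h
      have h'' := (Nat.cast_le (α := ℝ)).mpr h'
      push_cast at h''
      rw [hK_def]; linarith
    have h2 : 1 ≤ Feq K m - Feq K n + 2 * K := by nlinarith
    calc (1:ℝ) ≤ Feq K m - Feq K n + 2 * K := h2
      _ ≤ |Feq K m - Feq K n + 2 * K| := le_abs_self _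
  · have h1 : (m:ℝ) + K + 1 ≤ (n:ℝ) := by
      have h' : m + k₀ + 1 ≤ n := h
      have h'' := (Nat.cast_le (α := ℝ)).mpr h'
      push_cast at h''
      rw [hK_def]; linarith
    have h2 : Feq K m - Feq K n + 2 * K ≤ -1 := by nlinarith
    calc (1:ℝ) ≤ -(Feq K m - Feq K n + 2 * K) := by linarith
      _ ≤ |Feq K m - Feq K n + 2 * K| := neg_le_abs _

set_option maxHeartbeats 2000000 in
/-- Quantitative closeness of the two branches of eigenfrequencies in the equal wave speed
case when `√(k₁/k₂) = k₀π` for some positive integer `k₀`. -/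
theorem stmt_11 (ρ₁ ρ₂ k₁ k₂ : ℝ) (hρ₁ : 0 < ρ₁) (hρ₂ : 0 < ρ₂) (hk₁ : 0 < k₁) (hk₂ : 0 < k₂)
    (heq : k₁ / ρ₁ = k₂ / ρ₂) (hA1 : condA1 ρ₁ ρ₂ k₁ k₂)
    (k₀ : ℕ) (hk₀ : 0 < k₀) (hres : Real.sqrt (k₁ / k₂) = (k₀ : ℝ) * Real.pi) :
    ∃ c₁ c₂ : ℝ, 0 < c₁ ∧ c₁ < c₂ ∧
      (∃ N₀ : ℕ, ∀ m n : ℕ, N₀ ≤ m → N₀ ≤ n →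
        c₁ / (m : ℝ) ^ 2 ≤ |mu1eq ρ₁ ρ₂ k₁ m - mu2eq ρ₁ ρ₂ k₁ n| ∧
        c₁ / (n : ℝ) ^ 2 ≤ |mu1eq ρ₁ ρ₂ k₁ m - mu2eq ρ₁ ρ₂ k₁ n|) ∧
      ∀ N : ℕ, ∃ m n : ℕ, N ≤ m ∧ N ≤ n ∧
        |mu1eq ρ₁ ρ₂ k₁ m - mu2eq ρ₁ ρ₂ k₁ n| ≤ c₂ / (m : ℝ) ^ 2 ∧
        |mu1eq ρ₁ ρ₂ k₁ m - mu2eq ρ₁ ρ₂ k₁ n| ≤ c₂ / (n : ℝ) ^ 2 := by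
  have hπ := Real.pi_pos
  set K : ℝ := (k₀ : ℝ) with hK_def
  have hK1 : (1:ℝ) ≤ K := by rw [hK_def]; exact_mod_cast hk₀
  have hK : (0:ℝ) < K := by linarith
  have heval := mu_eval ρ₁ ρ₂ k₁ k₂ hρ₁ hρ₂ hk₁ hk₂ heq K hK hres
  set c : ℝ := Real.sqrt (k₁ / ρ₁) * Real.pi / 2 with hc_def
  have hc : 0 < c := by
    have h := Real.sqrt_pos.mpr (div_pos hk₁ hρ₁)
    rw [hc_def]; positivity
  have hdiff : ∀ m n : ℕ, mu1eq ρ₁ ρ₂ k₁ m - mu2eq ρ₁ ρ₂ k₁ n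
      = c * (Feq K m - Feq K n + 2 * K) := by
    intro m n
    rw [(heval m).1, (heval n).2]
    unfold Feq
    ring
  have hK2 : (1:ℝ) ≤ K ^ 2 := by nlinarith [hK1, hK]
  have hK3 : (1:ℝ) ≤ K ^ 3 := by nlinarith [hK2, hK1, hK]
  have hcastm : ∀ m : ℕ, k₀ ^ 2 ≤ m → K ^ 2 ≤ (m:ℝ) ∧ (1:ℝ) ≤ (m:ℝ) ∧ K ≤ (m:ℝ) := by
    intro m hm
    have h1 : K ^ 2 ≤ (m:ℝ) := by rw [hK_def]; exact_mod_cast hm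
    have h2 : (1:ℝ) ≤ (m:ℝ) := by nlinarith [h1, hK1]
    have h3 : K ≤ (m:ℝ) := by nlinarith [h1, hK1]
    exact ⟨h1, h2, h3⟩
  refine ⟨c / 25, c * K ^ 3, div_pos hc (by norm_num), ?_, ⟨k₀ ^ 2, ?_⟩, ?_⟩
  · have h4 : c * 1 ≤ c * K ^ 3 := mul_le_mul_of_nonneg_left hK3 hc.le
    linarith only [h4, hc]
  · -- lower bounds
    intro m n hm hn
    obtain ⟨hmK, hm1, hKm⟩ := hcastm m hm
    obtain ⟨hnK, hn1, hKn⟩ := hcastm n hn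
    rw [hdiff m n]
    by_cases hne : n = m + k₀
    · subst hne
      obtain ⟨hl, hu⟩ := feq_diag k₀ hk₀ m hm
      rw [← hK_def] at hl hu
      set n : ℕ := m + k₀ with hn_def
      have hnR : (n:ℝ) = (m:ℝ) + K := by rw [hn_def, hK_def]; push_cast; ring
      have hmn : (m:ℝ) ≤ n := by rw [hnR]; linarith
      have hn2m : (n:ℝ) ≤ 2 * m := by rw [hnR]; linarith
      have hmn0' : (0:ℝ) < (m:ℝ) * n := by nlinarith [hm1, hmn]
      have hG0 : 0 < Feq K m - Feq K n + 2 * K := by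
        refine lt_of_lt_of_le ?_ hl
        exact div_pos (by nlinarith [pow_pos hK 3]) (by linarith only [hmn0'])
      rw [abs_of_pos (mul_pos hc hG0)]
      have hstep2 : c * (2 * K ^ 3 / (25 * ((m:ℝ) * n))) ≤ c * (Feq K m - Feq K n + 2 * K) :=
        mul_le_mul_of_nonneg_left hl hc.le
      constructor
      · have hstep : c / 25 / (m:ℝ) ^ 2 ≤ c * (2 * K ^ 3 / (25 * ((m:ℝ) * n))) := by
          rw [div_div, mul_div_assoc', div_le_div_iff₀ (by positivity) (by positivity)]
          have hmn2 : (m:ℝ) * n ≤ 2 * (m:ℝ) ^ 2 := by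
            have h := mul_le_mul_of_nonneg_left hn2m (Nat.cast_nonneg (α := ℝ) m)
            linarith only [h]
          have e1 : c * ((m:ℝ) * n) ≤ c * (2 * (m:ℝ) ^ 2) :=
            mul_le_mul_of_nonneg_left hmn2 hc.le
          have e2 : c * (m:ℝ) ^ 2 * 1 ≤ c * (m:ℝ) ^ 2 * K ^ 3 :=
            mul_le_mul_of_nonneg_left hK3 (mul_nonneg hc.le (sq_nonneg _))
          have e3 : (0:ℝ) ≤ c * (m:ℝ) ^ 2 * K ^ 3 :=
            mul_nonneg (mul_nonneg hc.le (sq_nonneg _)) (by positivity)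
          linarith only [e1, e2, e3]
        linarith only [hstep, hstep2]
      · have hstep : c / 25 / (n:ℝ) ^ 2 ≤ c * (2 * K ^ 3 / (25 * ((m:ℝ) * n))) := by
          rw [div_div, mul_div_assoc', div_le_div_iff₀ (by positivity) (by positivity)]
          have hmn2 : (m:ℝ) * n ≤ (n:ℝ) ^ 2 := by
            have h := mul_le_mul_of_nonneg_right hmn (Nat.cast_nonneg (α := ℝ) n)
            linarith only [h]
          have e1 : c * ((m:ℝ) * n) ≤ c * (n:ℝ) ^ 2 :=
            mul_le_mul_of_nonneg_left hmn2 hc.le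
          have e2 : c * (n:ℝ) ^ 2 * 1 ≤ c * (n:ℝ) ^ 2 * K ^ 3 :=
            mul_le_mul_of_nonneg_left hK3 (mul_nonneg hc.le (sq_nonneg _))
          have e3 : (0:ℝ) ≤ c * (n:ℝ) ^ 2 * K ^ 3 :=
            mul_nonneg (mul_nonneg hc.le (sq_nonneg _)) (by positivity)
          linarith only [e1, e2, e3]
        linarith only [hstep, hstep2]
    · have h1 := feq_off k₀ hk₀ m n hm hn hne
      rw [← hK_def] at h1
      have h2 : c ≤ |c * (Feq K m - Feq K n + 2 * K)| := by
        rw [abs_mul, abs_of_pos hc]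
        nlinarith [abs_nonneg (Feq K m - Feq K n + 2 * K), hc, h1]
      have h3m : c / 25 / (m:ℝ) ^ 2 ≤ c := by
        rw [div_div]
        exact div_le_self hc.le (by nlinarith [hm1])
      have h3n : c / 25 / (n:ℝ) ^ 2 ≤ c := by
        rw [div_div]
        exact div_le_self hc.le (by nlinarith [hn1])
      exact ⟨le_trans h3m h2, le_trans h3n h2⟩
  · -- existence of close pairs
    intro N
    set m : ℕ := max N (k₀ ^ 2) with hm_def
    have hm : k₀ ^ 2 ≤ m := le_max_right _ _
    obtain ⟨hmK, hm1, hKm⟩ := hcastm m hm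
    obtain ⟨hl, hu⟩ := feq_diag k₀ hk₀ m hm
    rw [← hK_def] at hl hu
    set n : ℕ := m + k₀ with hn_def
    have hnR : (n:ℝ) = (m:ℝ) + K := by rw [hn_def, hK_def]; push_cast; ring
    have hmn : (m:ℝ) ≤ n := by rw [hnR]; linarith
    have hn2m : (n:ℝ) ≤ 2 * m := by rw [hnR]; linarith
    have hn1 : (1:ℝ) ≤ n := by linarith
    have hmn0' : (0:ℝ) < (m:ℝ) * n := by nlinarith [hm1, hmn]
    have hG0 : 0 < Feq K m - Feq K n + 2 * K :=
      lt_of_lt_of_le (div_pos (by nlinarith [pow_pos hK 3]) (by linarith only [hmn0'])) hl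
    have hD : |mu1eq ρ₁ ρ₂ k₁ m - mu2eq ρ₁ ρ₂ k₁ n| = c * (Feq K m - Feq K n + 2 * K) := by
      rw [hdiff m n]
      exact abs_of_pos (mul_pos hc hG0)
    have key : c * (Feq K m - Feq K n + 2 * K) ≤ c * (5 * K ^ 3 / (16 * ((m:ℝ) * n))) :=
      mul_le_mul_of_nonneg_left hu hc.le
    refine ⟨m, n, le_max_left _ _,
      le_trans (le_max_left _ _) (Nat.le_add_right _ _), ?_, ?_⟩
    · rw [hD]
      refine le_trans key ?_
      rw [mul_div_assoc', div_le_div_iff₀ (by positivity) (by positivity)]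
      have e1 : c * K ^ 3 * ((m:ℝ) * m) ≤ c * K ^ 3 * ((m:ℝ) * n) :=
        mul_le_mul_of_nonneg_left
          (mul_le_mul_of_nonneg_left hmn (Nat.cast_nonneg (α := ℝ) m))
          (mul_nonneg hc.le (by positivity))
      have e0 : (0:ℝ) ≤ c * K ^ 3 * ((m:ℝ) * n) :=
        mul_nonneg (mul_nonneg hc.le (by positivity)) (by positivity)
      linarith only [e1, e0]
    · rw [hD]
      refine le_trans key ?_
      rw [mul_div_assoc', div_le_div_iff₀ (by positivity) (by positivity)]
      have t : (n:ℝ) * n ≤ 2 * ((m:ℝ) * n) := by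
        have h := mul_le_mul_of_nonneg_right hn2m (Nat.cast_nonneg (α := ℝ) n)
        linarith only [h]
      have e1 : c * K ^ 3 * ((n:ℝ) * n) ≤ c * K ^ 3 * (2 * ((m:ℝ) * n)) :=
        mul_le_mul_of_nonneg_left t (mul_nonneg hc.le (by positivity))
      have e0 : (0:ℝ) ≤ c * K ^ 3 * ((m:ℝ) * n) :=
        mul_nonneg (mul_nonneg hc.le (by positivity)) (by positivity)
      linarith only [e1, e0]
end
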